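/- arXiv:1904.09880 — 8 statements merged into one kernel-verified Lean document; each statement's English description precedes it below -/
import Mathlib

section
/- Let F(s) = ∫₀ˢ (1 − t³)^{−1/2} dt for s ∈ [0,1] and π_{2,3} = 2F(1). For every x ∈ [0, π_{2,3}/4], if s, S ∈ [0,1] satisfy F(s) = x and F(S) = 2x, and c = (1 − s³)^{1/2}, then S = 4·s·c·(3 + c)³ / ((1 + c)·(8 + s³)²). -/
open Set intervalIntegral MeasureTheory

lemma neg_half_rpow_nonneg (x : ℝ) : 0 ≤ x ^ (-(1/2) : ℝ) := by
  rcases lt_trichotomy x 0 with h | h | h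
  · rw [Real.rpow_def_of_neg h,
      show (-(1/2) : ℝ) * Real.pi = -(Real.pi/2) by ring, Real.cos_neg,
      Real.cos_pi_div_two, mul_zero]
  · rw [h, Real.zero_rpow (by norm_num)]
  · exact (Real.rpow_pos_of_pos h _).le

noncomputable def f23 (t : ℝ) : ℝ := (1 - t ^ 3) ^ (-(1/2) : ℝ)

lemma f23_meas : Measurable f23 := by unfold f23; fun_prop

lemma f23_nonneg (t : ℝ) : 0 ≤ f23 t := neg_half_rpow_nonneg _

lemma f23_pos {t : ℝ} (h : t < 1) : 0 < f23 t := by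
  have h3 : 0 < 1 - t ^ 3 := by nlinarith [sq_nonneg t, sq_nonneg (1+t)]
  exact Real.rpow_pos_of_pos h3 _

lemma f23_int {a b : ℝ} (ha : 0 ≤ a) (ha1 : a ≤ 1) (hb : 0 ≤ b) (hb1 : b ≤ 1) :
    IntervalIntegrable f23 volume a b := by
  have hg : IntervalIntegrable (fun t : ℝ => (1 - t) ^ (-(1/2) : ℝ)) volume a b := by
    have := ((intervalIntegrable_rpow' (a := 1 - a) (b := 1 - b) (r := -(1/2))
      (by norm_num)).comp_sub_left 1)
    simpa using this
  refine hg.mono_fun f23_meas.aestronglyMeasurable ?_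
  filter_upwards [MeasureTheory.ae_restrict_mem measurableSet_uIoc] with t ht
  have h0 : 0 ≤ t := le_trans (le_inf ha hb) ht.1.le
  have h1 : t ≤ 1 := le_trans ht.2 (sup_le ha1 hb1)
  have key : f23 t ≤ (1 - t) ^ (-(1/2) : ℝ) := by
    rcases eq_or_lt_of_le h1 with h' | h'
    · subst h'; unfold f23; norm_num
    · have hy : 0 < 1 - t := by linarith
      have hxy : 1 - t ≤ 1 - t ^ 3 := by
        nlinarith [mul_nonneg (mul_nonneg h0 hy.le) (by linarith : (0:ℝ) ≤ 1 + t)]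
      exact Real.rpow_le_rpow_of_nonpos hy hxy (by norm_num)
  rw [Real.norm_eq_abs, Real.norm_eq_abs, abs_of_nonneg (f23_nonneg t),
    abs_of_nonneg (neg_half_rpow_nonneg _)]
  exact key

noncomputable def F0 (s : ℝ) : ℝ := ∫ t in (0:ℝ)..s, f23 t

lemma F0_sub {u v : ℝ} (hu : u ∈ Icc (0:ℝ) 1) (hv : v ∈ Icc (0:ℝ) 1) :
    F0 v - F0 u = ∫ t in u..v, f23 t := by
  rw [F0, F0]
  exact integral_interval_sub_left (f23_int le_rfl zero_le_one hv.1 hv.2)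
    (f23_int le_rfl zero_le_one hu.1 hu.2)

lemma F0_strictMonoOn : StrictMonoOn F0 (Icc (0:ℝ) 1) := by
  intro u hu v hv huv
  have hpos : 0 < ∫ t in u..v, f23 t := by
    apply intervalIntegral_pos_of_pos_on (f23_int hu.1 hu.2 hv.1 hv.2)
    · intro t ht; exact f23_pos (lt_of_lt_of_le ht.2 hv.2)
    · exact huv
  have := F0_sub hu hv
  linarith

lemma F0_continuousOn : ContinuousOn F0 (Icc (0:ℝ) 1) := by
  have h := continuousOn_primitive_interval (a := (0:ℝ)) (b := 1) (μ := volume)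
    (f := f23) ?_
  · rwa [uIcc_of_le (by norm_num : (0:ℝ) ≤ 1)] at h
  · rw [uIcc_of_le (by norm_num : (0:ℝ) ≤ 1)]
    rw [← intervalIntegrable_iff_integrableOn_Icc_of_le (by norm_num : (0:ℝ) ≤ 1)]
    exact f23_int le_rfl zero_le_one zero_le_one le_rfl

lemma F0_hasDerivAt {v : ℝ} (hv0 : 0 ≤ v) (hv1 : v < 1) :
    HasDerivAt F0 (f23 v) v := by
  apply intervalIntegral.integral_hasDerivAt_right
    (f23_int le_rfl zero_le_one hv0 hv1.le)
    ⟨univ, Filter.univ_mem, f23_meas.aestronglyMeasurable⟩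
  have h3 : (0:ℝ) < 1 - v ^ 3 := by nlinarith [sq_nonneg v, sq_nonneg (1+v)]
  have : ContinuousAt (fun t : ℝ => 1 - t ^ 3) v := by fun_prop
  exact (Real.continuousAt_rpow_const _ _ (Or.inl (by linarith))).comp this

noncomputable def gam (u : ℝ) : ℝ := Real.sqrt (1 - u ^ 3)
noncomputable def G23 (u : ℝ) : ℝ :=
  4 * u * gam u * (3 + gam u) ^ 3 / ((1 + gam u) * (8 + u ^ 3) ^ 2)
def P23 (c : ℝ) : ℝ := c ^ 4 + 24 * c ^ 3 + 18 * c ^ 2 - 27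
noncomputable def q23 (u : ℝ) : ℝ := P23 (gam u) / ((1 + gam u) * (3 - gam u) ^ 3)

lemma gam_nonneg (u : ℝ) : 0 ≤ gam u := Real.sqrt_nonneg _
lemma gam_le_one {u : ℝ} (hu : 0 ≤ u) : gam u ≤ 1 := by
  have : gam u ≤ Real.sqrt 1 := Real.sqrt_le_sqrt (by nlinarith [pow_nonneg hu 3])
  simpa using this
lemma gam_sq {u : ℝ} (hu : u ≤ 1) : gam u ^ 2 = 1 - u ^ 3 := by
  rw [gam, sq, Real.mul_self_sqrt (by nlinarith [sq_nonneg u, sq_nonneg (1+u)])]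

lemma alg_one_sub_cube {u g : ℝ} (hg2 : g ^ 2 = 1 - u ^ 3) (hg0 : 0 ≤ g) (hg1 : g ≤ 1) :
    1 - (4 * u * g * (3 + g) ^ 3 / ((1 + g) * (8 + u ^ 3) ^ 2)) ^ 3
      = (P23 g / ((1 + g) * (3 - g) ^ 3)) ^ 2 := by
  have hu3 : u ^ 3 = 1 - g ^ 2 := by linarith
  have h1g : (1 + g) ≠ 0 := by positivity
  have h3g : (3 - g) ≠ 0 := by intro h; nlinarith
  rw [div_pow, show (4 * u * g * (3 + g) ^ 3) ^ 3 = 64 * u ^ 3 * g ^ 3 * (3 + g) ^ 9 by ring,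
    hu3, show (8:ℝ) + (1 - g ^ 2) = (3 - g) * (3 + g) by ring]
  rw [P23]
  field_simp
  ring

lemma G23_hasDerivAt {u : ℝ} (hu0 : 0 < u) (hu1 : u < 1) :
    HasDerivAt G23 (2 * q23 u / gam u) u := by
  have h3 : 0 < 1 - u ^ 3 := by nlinarith [sq_nonneg u, sq_nonneg (1+u)]
  have hγpos : 0 < gam u := Real.sqrt_pos.mpr h3
  have hγ2 : gam u ^ 2 = 1 - u ^ 3 := gam_sq hu1.le
  have hgam : HasDerivAt gam (-(3 * u ^ 2) / (2 * gam u)) u := by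
    have h1 : HasDerivAt (fun v : ℝ => 1 - v ^ 3) (-(3 * u ^ 2)) u := by
      simpa using ((hasDerivAt_pow 3 u).const_sub 1)
    have h2 := (Real.hasDerivAt_sqrt (ne_of_gt h3)).comp u h1
    refine h2.congr_deriv ?_
    rw [gam]
    field_simp
  have hNu : HasDerivAt (fun v => 4 * v * gam v * (3 + gam v) ^ 3)
      ((4 * gam u + 4 * u * (-(3 * u ^ 2) / (2 * gam u))) * (3 + gam u) ^ 3
        + 4 * u * gam u * (3 * (3 + gam u) ^ 2 * (-(3 * u ^ 2) / (2 * gam u)))) u := by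
    have ha : HasDerivAt (fun v : ℝ => 4 * v * gam v) (4 * gam u + 4 * u * (-(3 * u ^ 2) / (2 * gam u))) u := by
      have := ((hasDerivAt_id u).const_mul 4).mul hgam
      refine this.congr_deriv ?_
      simp only [id_eq]
      ring
    have hb : HasDerivAt (fun v : ℝ => (3 + gam v) ^ 3) (3 * (3 + gam u) ^ 2 * (-(3 * u ^ 2) / (2 * gam u))) u := by
      have := (hgam.const_add 3).pow 3
      refine this.congr_deriv ?_
      norm_num
    exact ha.mul hb
  have hDe : HasDerivAt (fun v => (1 + gam v) * (8 + v ^ 3) ^ 2)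
      ((-(3 * u ^ 2) / (2 * gam u)) * (8 + u ^ 3) ^ 2
        + (1 + gam u) * (2 * (8 + u ^ 3) * (3 * u ^ 2))) u := by
    have hb : HasDerivAt (fun v : ℝ => (8 + v ^ 3) ^ 2) (2 * (8 + u ^ 3) * (3 * u ^ 2)) u := by
      have := ((hasDerivAt_pow 3 u).const_add 8).pow 2
      refine this.congr_deriv ?_
      norm_num
    exact (hgam.const_add 1).mul hb
  have hden : (1 + gam u) * (8 + u ^ 3) ^ 2 ≠ 0 := by positivity
  have hG := hNu.div hDe hden
  refine hG.congr_deriv ?_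
  have h1g : (1 + gam u) ≠ 0 := by positivity
  have h3g : (3 - gam u) ≠ 0 := by
    have hgle : gam u ≤ 1 := by nlinarith [hγ2, pow_pos hu0 3, hγpos]
    intro h; nlinarith
  have h8 : (8:ℝ) + u ^ 3 ≠ 0 := by positivity
  rw [q23, P23]
  field_simp
  linear_combination ((442368 * gam u ^ 1) + (103680 * gam u ^ 1 * u ^ 3) + (5184 * gam u ^ 1 * u ^ 6) + (-108 * gam u ^ 1 * u ^ 9) + (884736 * gam u ^ 2) + (207360 * gam u ^ 2 * u ^ 3) + (10368 * gam u ^ 2 * u ^ 6) + (-216 * gam u ^ 2 * u ^ 9) + (963072 * gam u ^ 3) + (207360 * gam u ^ 3 * u ^ 3) + (10584 * gam u ^ 3 * u ^ 6) + (-36 * gam u ^ 3 * u ^ 9) + (648192 * gam u ^ 4) + (115200 * gam u ^ 4 * u ^ 3) + (6192 * gam u ^ 4 * u ^ 6) + (240 * gam u ^ 4 * u ^ 9) + (114176 * gam u ^ 5) + (21504 * gam u ^ 5 * u ^ 3) + (3048 * gam u ^ 5 * u ^ 6) + (268 * gam u ^ 5 * u ^ 9) + (-26624 * gam u ^ 6)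 + (13824 * gam u ^ 6 * u ^ 3) + (2976 * gam u ^ 6 * u ^ 6) + (104 * gam u ^ 6 * u ^ 9) + (-12800 * gam u ^ 7) + (3584 * gam u ^ 7 * u ^ 3) + (680 * gam u ^ 7 * u ^ 6) + (4 * gam u ^ 7 * u ^ 9) + (1024 * gam u ^ 8) + (-512 * gam u ^ 8 * u ^ 3) + (-80 * gam u ^ 8 * u ^ 6) + (512 * gam u ^ 9) + (-256 * gam u ^ 9 * u ^ 3) + (-40 * gam u ^ 9 * u ^ 6) + (-55296 * gam u ^ 0 * u ^ 0) + (-6048 * gam u ^ 0 * u ^ 3) + (108 * gam u ^ 0 * u ^ 6) + (-497664 * gam u ^ 1 * u ^ 0) + (-109728 * gam u ^ 1 * u ^ 3) + (-5076 * gam u ^ 1 * u ^ 6) + (108 * gam u ^ 1 * u ^ 9) + (-949824 * gam u ^ 2 * u ^ 0) + (-212184 * gam u ^ 2 * u ^ 3) + (-10440 * gam u ^ 2 * u ^ 6) + (216 * gam u ^ 2 * u ^ 9) + (-979008 * gam u ^ 3 * u ^ 0) + (-206808 * gam u ^ 3 * u ^ 3) + (-10752 * gam u ^ 3 * u ^ 6)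 + (36 * gam u ^ 3 * u ^ 9) + (-646528 * gam u ^ 4 * u ^ 0) + (-116656 * gam u ^ 4 * u ^ 3) + (-6292 * gam u ^ 4 * u ^ 6) + (-240 * gam u ^ 4 * u ^ 9) + (-112512 * gam u ^ 5 * u ^ 0) + (-22192 * gam u ^ 5 * u ^ 3) + (-3052 * gam u ^ 5 * u ^ 6) + (-268 * gam u ^ 5 * u ^ 9) + (26560 * gam u ^ 6 * u ^ 0) + (-13784 * gam u ^ 6 * u ^ 3) + (-2976 * gam u ^ 6 * u ^ 6) + (-104 * gam u ^ 6 * u ^ 9) + (12736 * gam u ^ 7 * u ^ 0) + (-3544 * gam u ^ 7 * u ^ 3) + (-680 * gam u ^ 7 * u ^ 6) + (-4 * gam u ^ 7 * u ^ 9) + (-1024 * gam u ^ 8 * u ^ 0) + (512 * gam u ^ 8 * u ^ 3) + (80 * gam u ^ 8 * u ^ 6) + (-512 * gam u ^ 9 * u ^ 0) + (256 * gam u ^ 9 * u ^ 3) + (40 * gam u ^ 9 * u ^ 6)) * hγ2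

lemma rpow_sq_neg_half {a : ℝ} (ha : 0 < a) : (a ^ 2) ^ (-(1/2) : ℝ) = a⁻¹ := by
  rw [← Real.rpow_natCast a 2, ← Real.rpow_mul ha.le]
  norm_num
  exact Real.rpow_neg_one a

lemma one_sub_G23_cube {u : ℝ} (hu : u ∈ Icc (0:ℝ) 1) :
    1 - G23 u ^ 3 = q23 u ^ 2 :=
  alg_one_sub_cube (gam_sq hu.2) (gam_nonneg u) (gam_le_one hu.1)

lemma G23_nonneg {u : ℝ} (hu0 : 0 ≤ u) : 0 ≤ G23 u := by
  unfold G23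
  have h1 := gam_nonneg u
  have h2 : (0:ℝ) < 8 + u ^ 3 := by nlinarith [pow_nonneg hu0 3]
  positivity

lemma G23_mem {u : ℝ} (hu : u ∈ Icc (0:ℝ) 1) : G23 u ∈ Icc (0:ℝ) 1 := by
  refine ⟨G23_nonneg hu.1, ?_⟩
  have h := one_sub_G23_cube hu
  have h3 : G23 u ^ 3 ≤ 1 := by nlinarith [sq_nonneg (q23 u)]
  exact (pow_le_one_iff_of_nonneg (G23_nonneg hu.1) (by norm_num)).mp h3

lemma G23_contOn : ContinuousOn G23 (Icc (0:ℝ) 1) := by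
  have hγ : Continuous gam := Real.continuous_sqrt.comp (by fun_prop)
  apply ContinuousOn.div
  · exact (((continuous_const.mul continuous_id).mul hγ).mul
      ((continuous_const.add hγ).pow 3)).continuousOn
  · exact ((continuous_const.add hγ).mul
      ((continuous_const.add (continuous_pow 3)).pow 2)).continuousOn
  · intro u hu
    have h1 : 0 < 1 + gam u := by linarith [gam_nonneg u]
    have h2 : (0:ℝ) < 8 + u ^ 3 := by nlinarith [pow_nonneg hu.1 3]
    positivity

lemma P23_lt {a b : ℝ} (ha : 0 ≤ a) (hab : a < b) : P23 a < P23 b := by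
  unfold P23
  have hb : 0 < b := lt_of_le_of_lt ha hab
  nlinarith [mul_pos hb hb, mul_nonneg ha ha, mul_nonneg (mul_nonneg ha ha) ha,
    mul_pos (mul_pos hb hb) hb, sq_nonneg (a + b), sq_nonneg (a - b),
    mul_nonneg (mul_nonneg ha ha) (le_of_lt hb)]

lemma G23_zero : G23 0 = 0 := by unfold G23; norm_num

lemma F0_zero : F0 0 = 0 := by unfold F0; simp

lemma exists_sstar : ∃ t, t ∈ Ioo (0:ℝ) 1 ∧ G23 t = 1 ∧
    ∀ u ∈ Icc (0:ℝ) t, F0 (G23 u) = 2 * F0 u := by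
  obtain ⟨c₀, hc₀mem, hc₀⟩ : ∃ c₀ ∈ Ioo (0:ℝ) 1, P23 c₀ = 0 := by
    have hcont : ContinuousOn P23 (Icc 0 1) := (by unfold P23; fun_prop : Continuous P23).continuousOn
    have him := intermediate_value_Ioo (le_of_lt zero_lt_one) hcont
    have h0 : (0:ℝ) ∈ Ioo (P23 0) (P23 1) := by unfold P23; norm_num
    obtain ⟨c₀, hmem, hval⟩ := him h0
    exact ⟨c₀, hmem, hval⟩
  obtain ⟨hc00, hc01⟩ := hc₀mem
  set t := (1 - c₀ ^ 2) ^ ((1:ℝ)/3) with ht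
  have hbase : 0 < 1 - c₀ ^ 2 := by nlinarith
  have hbase1 : 1 - c₀ ^ 2 < 1 := by nlinarith
  have ht0 : 0 < t := Real.rpow_pos_of_pos hbase _
  have ht1 : t < 1 := Real.rpow_lt_one hbase.le hbase1 (by norm_num)
  have ht3 : t ^ 3 = 1 - c₀ ^ 2 := by
    rw [ht, ← Real.rpow_natCast ((1 - c₀ ^ 2) ^ ((1:ℝ)/3)) 3, ← Real.rpow_mul hbase.le]
    norm_num
  have hgamt : gam t = c₀ := by
    rw [gam, ht3, show 1 - (1 - c₀ ^ 2) = c₀ ^ 2 by ring, Real.sqrt_sq hc00.le]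
  have hGt : G23 t = 1 := by
    have h := one_sub_G23_cube ⟨ht0.le, ht1.le⟩
    rw [q23, hgamt, hc₀] at h
    simp only [zero_div, ne_eq] at h
    have h3 : G23 t ^ 3 = 1 := by nlinarith [h]
    nlinarith [sq_nonneg (G23 t - 1), sq_nonneg (G23 t + 1), h3]
  refine ⟨t, ⟨ht0, ht1⟩, hGt, ?_⟩
  -- constancy of H
  set H : ℝ → ℝ := fun u => F0 (G23 u) - 2 * F0 u with hH
  have hsub : Icc (0:ℝ) t ⊆ Icc (0:ℝ) 1 := Icc_subset_Icc le_rfl ht1.le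
  have hHcont : ContinuousOn H (Icc (0:ℝ) t) := by
    apply ContinuousOn.sub
    · exact F0_continuousOn.comp (G23_contOn.mono hsub)
        (fun u hu => G23_mem (hsub hu))
    · exact continuousOn_const.mul (F0_continuousOn.mono hsub)
  have hderiv : ∀ u ∈ Ioo (0:ℝ) t, HasDerivAt H 0 u := by
    intro u hu
    have hu0 : 0 < u := hu.1
    have hu1 : u < 1 := lt_trans hu.2 ht1
    have h3 : 0 < 1 - u ^ 3 := by nlinarith [sq_nonneg u, sq_nonneg (1 + u)]
    have hγpos : 0 < gam u := Real.sqrt_pos.mpr h3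
    have hγgt : c₀ < gam u := by
      rw [← hgamt, gam, gam]
      apply Real.sqrt_lt_sqrt (by nlinarith [sq_nonneg t, sq_nonneg (1 + t)])
      have := pow_lt_pow_left₀ hu.2 hu0.le (n := 3) (by norm_num)
      linarith
    have hPpos : 0 < P23 (gam u) := by
      rw [← hc₀]; exact P23_lt hc00.le hγgt
    have hq : 0 < q23 u := by
      rw [q23]
      have h1 : 0 < 1 + gam u := by linarith [gam_nonneg u]
      have h2 : 0 < 3 - gam u := by linarith [gam_le_one hu0.le]
      positivity
    have honesub := one_sub_G23_cube ⟨hu0.le, hu1.le⟩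
    have hGlt1 : G23 u < 1 := by
      have h1 : G23 u ^ 3 < 1 ^ 3 := by nlinarith [honesub, hq]
      exact lt_of_pow_lt_pow_left₀ 3 (by norm_num) h1
    have hG0 : 0 ≤ G23 u := G23_nonneg hu0.le
    have hFG := F0_hasDerivAt hG0 hGlt1
    have hGd := G23_hasDerivAt hu0 hu1
    have hcomp := hFG.comp u hGd
    have hFu := F0_hasDerivAt hu0.le hu1
    have hfG : f23 (G23 u) = (q23 u)⁻¹ := by
      show (1 - G23 u ^ 3) ^ (-(1/2) : ℝ) = _
      rw [honesub, rpow_sq_neg_half hq]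
    have hfu : f23 u = (gam u)⁻¹ := by
      show (1 - u ^ 3) ^ (-(1/2) : ℝ) = _
      rw [← gam_sq hu1.le, rpow_sq_neg_half hγpos]
    have hzero : f23 (G23 u) * (2 * q23 u / gam u) - 2 * f23 u = 0 := by
      rw [hfG, hfu]
      field_simp
      ring
    have := hcomp.sub (hFu.const_mul 2)
    rw [show f23 (G23 u) * (2 * q23 u / gam u) - 2 * f23 u = 0 from hzero] at this
    exact this
  have hint : interior (Icc (0:ℝ) t) = Ioo (0:ℝ) t := interior_Icc
  have hdiff : DifferentiableOn ℝ H (interior (Icc (0:ℝ) t)) := by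
    rw [hint]; exact fun u hu => ((hderiv u hu).differentiableAt).differentiableWithinAt
  have hd0 : ∀ u ∈ interior (Icc (0:ℝ) t), deriv H u = 0 := by
    rw [hint]; exact fun u hu => (hderiv u hu).deriv
  have hmono : MonotoneOn H (Icc (0:ℝ) t) :=
    monotoneOn_of_deriv_nonneg (convex_Icc 0 t) hHcont hdiff
      (fun u hu => le_of_eq (hd0 u hu).symm)
  have hanti : AntitoneOn H (Icc (0:ℝ) t) :=
    antitoneOn_of_deriv_nonpos (convex_Icc 0 t) hHcont hdiff
      (fun u hu => le_of_eq (hd0 u hu))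
  intro u hu
  have h0mem : (0:ℝ) ∈ Icc (0:ℝ) t := ⟨le_rfl, ht0.le⟩
  have h1 := hmono h0mem hu hu.1
  have h2 := hanti h0mem hu hu.1
  have hH0 : H 0 = 0 := by rw [hH]; simp [G23_zero, F0_zero]
  have : H u = 0 := le_antisymm (by linarith) (by linarith)
  rw [hH] at this
  simp only at this
  linarith

/-- Theorem 1 (first half): double-angle formula for sin_{2,3} on [0, π_{2,3}/4]. -/
theorem sin23_double_angle_first_half
    (F : ℝ → ℝ) (hF : ∀ s, F s = ∫ t in (0:ℝ)..s, (1 - t ^ 3) ^ (-(1/2) : ℝ))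
    (pi23 : ℝ) (hpi : pi23 = 2 * F 1)
    (x : ℝ) (hx : x ∈ Set.Icc 0 (pi23 / 4))
    (s S : ℝ) (hs : s ∈ Set.Icc (0:ℝ) 1) (hS : S ∈ Set.Icc (0:ℝ) 1)
    (hFs : F s = x) (hFS : F S = 2 * x)
    (c : ℝ) (hc : c = (1 - s ^ 3) ^ ((1:ℝ)/2)) :
    S = 4 * s * c * (3 + c) ^ 3 / ((1 + c) * (8 + s ^ 3) ^ 2) := by
  have hFF0 : F = F0 := by funext v; rw [hF]; rfl
  subst hFF0
  obtain ⟨t, htmem, hGt1, hkey⟩ := exists_sstar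
  have ht01 : t ∈ Icc (0:ℝ) 1 := ⟨htmem.1.le, htmem.2.le⟩
  have h2F : F0 1 = 2 * F0 t := by
    have := hkey t ⟨htmem.1.le, le_rfl⟩
    rwa [hGt1] at this
  have hst : s ≤ t := by
    by_contra hcon
    push_neg at hcon
    have hlt : F0 t < F0 s := F0_strictMonoOn ht01 hs hcon
    have hx2 : x ≤ pi23 / 4 := hx.2
    rw [hpi] at hx2
    linarith [hFs ▸ hlt]
  have hkey_s : F0 (G23 s) = 2 * F0 s := hkey s ⟨hs.1, hst⟩
  have hGs_mem : G23 s ∈ Icc (0:ℝ) 1 := G23_mem hs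
  have hSG : S = G23 s := by
    apply F0_strictMonoOn.injOn hS hGs_mem
    rw [hFS, hkey_s, hFs]
  have hcg : c = gam s := by rw [hc, gam, Real.sqrt_eq_rpow]
  rw [hSG, hcg, G23]
end

section
/- Let F(s) = ∫₀ˢ (1 − t²)^{−3/4} dt for s ∈ [0,1] and π_{4/3,2} = 2F(1). For every x ∈ [0, π_{4/3,2}/4], if s, S ∈ [0,1] satisfy F(s) = x and F(S) = 2x, and c = (1 − s²)^{3/4}, then S = 4·s·c^{1/3}·(1 + c^{4/3}) / (2c^{2/3} + s²)². -/
open Real MeasureTheory Set intervalIntegral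

noncomputable def f432 : ℝ → ℝ := fun t => (1 - t ^ 2) ^ (-(3/4) : ℝ)
noncomputable def b432 (t : ℝ) : ℝ := Real.sqrt (Real.sqrt (1 - t ^ 2))
noncomputable def u432 (t : ℝ) : ℝ :=
  4 * t * b432 t * (2 - t ^ 2) / (2 * b432 t ^ 2 + t ^ 2) ^ 2
noncomputable def T432 : ℝ := Real.sqrt (2 * Real.sqrt 2 - 2)

lemma f432_measurable : Measurable f432 := by
  have hrm : Measurable (fun x : ℝ => x ^ (-(3/4) : ℝ)) :=
    measurable_of_continuousOn_compl_singleton 0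
      (fun x hx => (Real.continuousAt_rpow_const x _ (Or.inl hx)).continuousWithinAt)
  exact hrm.comp (measurable_const.sub (measurable_id.pow_const 2))



lemma pow4_rpow {y : ℝ} (hy : 0 ≤ y) : (y ^ 4) ^ (-(3/4) : ℝ) = (y ^ 3)⁻¹ := by
  rw [← Real.rpow_natCast y 4, ← Real.rpow_mul hy]
  norm_num

lemma b432_nonneg (t : ℝ) : 0 ≤ b432 t := Real.sqrt_nonneg _

lemma b432_sq (t : ℝ) : b432 t ^ 2 = Real.sqrt (1 - t ^ 2) :=
  Real.sq_sqrt (Real.sqrt_nonneg _)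

lemma b432_pow4 {t : ℝ} (h : t ^ 2 ≤ 1) : b432 t ^ 4 = 1 - t ^ 2 := by
  have h2 := b432_sq t
  have := Real.sq_sqrt (show (0:ℝ) ≤ 1 - t ^ 2 by linarith)
  nlinarith [this, h2]

lemma b432_pos {t : ℝ} (h : t ^ 2 < 1) : 0 < b432 t := by
  have : 0 < Real.sqrt (1 - t ^ 2) := Real.sqrt_pos.2 (by linarith)
  exact Real.sqrt_pos.2 this

lemma D432_ge_one {t : ℝ} (h : t ^ 2 ≤ 1) : 1 ≤ 2 * b432 t ^ 2 + t ^ 2 := by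
  have h4 := b432_pow4 h
  have h0 := b432_nonneg t
  nlinarith [sq_nonneg (b432 t ^ 2 - 1), sq_nonneg (b432 t)]

lemma one_sub_u432_sq {t : ℝ} (h : t ^ 2 ≤ 1) :
    1 - u432 t ^ 2 = ((2 * b432 t ^ 2 - t ^ 2) / (2 * b432 t ^ 2 + t ^ 2)) ^ 4 := by
  have hD : (0:ℝ) < 2 * b432 t ^ 2 + t ^ 2 := lt_of_lt_of_le one_pos (D432_ge_one h)
  have hD4 : (2 * b432 t ^ 2 + t ^ 2) ^ 4 ≠ 0 := by positivity
  have hb4 := b432_pow4 h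
  have key : (2 * b432 t ^ 2 + t ^ 2) ^ 4 - (4 * t * b432 t * (2 - t ^ 2)) ^ 2
      = (2 * b432 t ^ 2 - t ^ 2) ^ 4 := by
    linear_combination (64 * t ^ 2 * b432 t ^ 2) * hb4
  have hu2 : u432 t ^ 2
      = (4 * t * b432 t * (2 - t ^ 2)) ^ 2 / (2 * b432 t ^ 2 + t ^ 2) ^ 4 := by
    rw [u432, div_pow]; ring_nf
  rw [hu2, div_pow, eq_div_iff hD4, sub_mul, div_mul_cancel₀ _ hD4, one_mul, key]

lemma sqrt2_facts : Real.sqrt 2 ^ 2 = 2 ∧ 1 ≤ Real.sqrt 2 := by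
  constructor
  · exact Real.sq_sqrt (by norm_num)
  · rw [show (1:ℝ) = Real.sqrt 1 by simp]
    exact Real.sqrt_le_sqrt (by norm_num)

lemma T432_sq : T432 ^ 2 = 2 * Real.sqrt 2 - 2 := by
  obtain ⟨h2, h1⟩ := sqrt2_facts
  exact Real.sq_sqrt (by nlinarith)

lemma T432_nonneg : 0 ≤ T432 := Real.sqrt_nonneg _

lemma T432_sq_lt_one : T432 ^ 2 < 1 := by
  obtain ⟨h2, h1⟩ := sqrt2_facts
  rw [T432_sq]; nlinarith

lemma T432_lt_one : T432 < 1 := by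
  nlinarith [T432_sq_lt_one, T432_nonneg]

/-- w = 2b² - t² is positive strictly left of T432 -/
lemma w432_pos {t : ℝ} (h0 : 0 ≤ t) (hT : t < T432) : 0 < 2 * b432 t ^ 2 - t ^ 2 := by
  obtain ⟨h2, h1⟩ := sqrt2_facts
  have ht2 : t ^ 2 < 2 * Real.sqrt 2 - 2 := by
    nlinarith [T432_sq, T432_nonneg]
  have hb4 : b432 t ^ 4 = 1 - t ^ 2 := b432_pow4 (by nlinarith)
  have hb0 := b432_nonneg t
  -- 4*(1-t²) - t⁴ = (2√2-2-t²)(t²+2+2√2) > 0, so (2b²)² > (t²)², so 2b² > t²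
  have key : t ^ 4 < 4 * (1 - t ^ 2) := by nlinarith [mul_pos (show (0:ℝ) < 2 * Real.sqrt 2 - 2 - t ^ 2 by linarith) (show (0:ℝ) < t ^ 2 + 2 + 2 * Real.sqrt 2 by positivity)]
  nlinarith [sq_nonneg (2 * b432 t ^ 2 - t ^ 2), sq_nonneg (2 * b432 t ^ 2 + t ^ 2)]

lemma w432_T : 2 * b432 T432 ^ 2 - T432 ^ 2 = 0 := by
  obtain ⟨h2, h1⟩ := sqrt2_facts
  have : (1 : ℝ) - T432 ^ 2 = (Real.sqrt 2 - 1) ^ 2 := by rw [T432_sq]; ring_nf; nlinarith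
  rw [b432_sq, this, Real.sqrt_sq (by linarith), T432_sq]; ring

lemma u432_nonneg {t : ℝ} (h0 : 0 ≤ t) (h1 : t ≤ 1) : 0 ≤ u432 t := by
  have : 0 ≤ 2 - t ^ 2 := by nlinarith
  have hb := b432_nonneg t
  rw [u432]
  positivity

lemma u432_le_one {t : ℝ} (h0 : 0 ≤ t) (h1 : t ≤ 1) : u432 t ≤ 1 := by
  have h := one_sub_u432_sq (show t ^ 2 ≤ 1 by nlinarith)
  have h4 : (0:ℝ) ≤ ((2 * b432 t ^ 2 - t ^ 2) / (2 * b432 t ^ 2 + t ^ 2)) ^ 4 := by positivity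
  nlinarith [u432_nonneg h0 h1]

lemma u432_lt_one {t : ℝ} (h0 : 0 ≤ t) (hT : t < T432) : u432 t < 1 := by
  have ht1 : t ≤ 1 := le_trans hT.le T432_lt_one.le
  have ht2 : t ^ 2 ≤ 1 := by nlinarith
  have hw := w432_pos h0 hT
  have hD : (0:ℝ) < 2 * b432 t ^ 2 + t ^ 2 := lt_of_lt_of_le one_pos (D432_ge_one ht2)
  have h := one_sub_u432_sq ht2
  have h4 : (0:ℝ) < ((2 * b432 t ^ 2 - t ^ 2) / (2 * b432 t ^ 2 + t ^ 2)) ^ 4 := by positivity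
  nlinarith [u432_nonneg h0 ht1]

lemma u432_T : u432 T432 = 1 := by
  have h := one_sub_u432_sq T432_sq_lt_one.le
  rw [w432_T] at h
  simp at h
  have h0 : 0 ≤ u432 T432 := u432_nonneg T432_nonneg T432_lt_one.le
  nlinarith [h]

lemma u432_zero : u432 0 = 0 := by simp [u432]

lemma f432_eq {t : ℝ} (h : t ^ 2 ≤ 1) : f432 t = (b432 t ^ 3)⁻¹ := by
  rw [f432, ← b432_pow4 h, pow4_rpow (b432_nonneg t)]

lemma f432_u432 {t : ℝ} (h0 : 0 ≤ t) (hT : t < T432) :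
    f432 (u432 t) = (((2 * b432 t ^ 2 - t ^ 2) / (2 * b432 t ^ 2 + t ^ 2)) ^ 3)⁻¹ := by
  have ht2 : t ^ 2 ≤ 1 := by nlinarith [T432_lt_one, T432_nonneg, hT, h0]
  have hw := (w432_pos h0 hT).le
  have hD : (0:ℝ) < 2 * b432 t ^ 2 + t ^ 2 := lt_of_lt_of_le one_pos (D432_ge_one ht2)
  rw [f432, one_sub_u432_sq ht2, pow4_rpow (div_nonneg hw hD.le)]

lemma u432_eq_sqrt_form : u432 = fun t =>
    4 * t * Real.sqrt (Real.sqrt (1 - t ^ 2)) * (2 - t ^ 2)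
      / (2 * Real.sqrt (1 - t ^ 2) + t ^ 2) ^ 2 := by
  funext t
  rw [u432, b432_sq]
  rfl

lemma hasDerivAt_u432 {t : ℝ} (h : t ^ 2 < 1) :
    HasDerivAt u432
      (2 * (2 * b432 t ^ 2 - t ^ 2) ^ 3 / (b432 t ^ 3 * (2 * b432 t ^ 2 + t ^ 2) ^ 3)) t := by
  have h1t : (0:ℝ) < 1 - t ^ 2 := by linarith
  have ha : 0 < Real.sqrt (1 - t ^ 2) := Real.sqrt_pos.2 h1t
  have hb : 0 < b432 t := b432_pos h
  have hD : (0:ℝ) < 2 * b432 t ^ 2 + t ^ 2 := lt_of_lt_of_le one_pos (D432_ge_one h.le)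
  have hDs : (0:ℝ) < 2 * Real.sqrt (1 - t ^ 2) + t ^ 2 := by rw [← b432_sq]; exact hD
  -- inner: 1 - x^2
  have h1 : HasDerivAt (fun x : ℝ => 1 - x ^ 2) (-(2 * t)) t := by
    simpa using ((hasDerivAt_pow 2 t).const_sub 1)
  -- sqrt(1-x^2)
  have h2 : HasDerivAt (fun x : ℝ => Real.sqrt (1 - x ^ 2))
      (1 / (2 * Real.sqrt (1 - t ^ 2)) * (-(2 * t))) t :=
    (Real.hasDerivAt_sqrt (ne_of_gt h1t)).comp t h1
  -- b = sqrt(sqrt(1-x^2))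
  have h3 : HasDerivAt (fun x : ℝ => Real.sqrt (Real.sqrt (1 - x ^ 2)))
      (1 / (2 * b432 t) * (1 / (2 * Real.sqrt (1 - t ^ 2)) * (-(2 * t)))) t := by
    have := (Real.hasDerivAt_sqrt (ne_of_gt ha)).comp t h2
    exact this
  -- numerator N x = 4*x*B x*(2-x^2)
  have hN : HasDerivAt (fun x : ℝ => 4 * x * Real.sqrt (Real.sqrt (1 - x ^ 2)) * (2 - x ^ 2))
      ((4 * b432 t + 4 * t * (1 / (2 * b432 t) * (1 / (2 * Real.sqrt (1 - t ^ 2)) * (-(2 * t)))))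
        * (2 - t ^ 2) + 4 * t * b432 t * (-(2 * t))) t := by
    have hx : HasDerivAt (fun x : ℝ => 4 * x) 4 t := by
      simpa using (hasDerivAt_id t).const_mul 4
    have hq : HasDerivAt (fun x : ℝ => 2 - x ^ 2) (-(2 * t)) t := by
      simpa using ((hasDerivAt_pow 2 t).const_sub 2)
    have := (hx.mul h3).mul hq
    exact this
  -- denominator (2*sqrt(1-x^2)+x^2)^2
  have hDen : HasDerivAt (fun x : ℝ => (2 * Real.sqrt (1 - x ^ 2) + x ^ 2) ^ 2)
      (2 * (2 * Real.sqrt (1 - t ^ 2) + t ^ 2) ^ 1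
        * (2 * (1 / (2 * Real.sqrt (1 - t ^ 2)) * (-(2 * t))) + 2 * t)) t := by
    have hin : HasDerivAt (fun x : ℝ => 2 * Real.sqrt (1 - x ^ 2) + x ^ 2)
        (2 * (1 / (2 * Real.sqrt (1 - t ^ 2)) * (-(2 * t))) + 2 * t) t := by
      have := (h2.const_mul 2).add (hasDerivAt_pow 2 t)
      simpa [Pi.add_def] using this
    exact hin.pow 2
  have hDen0 : ((2 * Real.sqrt (1 - t ^ 2) + t ^ 2) ^ 2) ≠ 0 := by positivity
  have hInv := hDen.inv hDen0
  have htot := hN.mul hInv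
  rw [u432_eq_sqrt_form]
  have hfun : (fun x : ℝ => 4 * x * Real.sqrt (Real.sqrt (1 - x ^ 2)) * (2 - x ^ 2)
      * ((2 * Real.sqrt (1 - x ^ 2) + x ^ 2) ^ 2)⁻¹)
      = fun x : ℝ => 4 * x * Real.sqrt (Real.sqrt (1 - x ^ 2)) * (2 - x ^ 2)
      / (2 * Real.sqrt (1 - x ^ 2) + x ^ 2) ^ 2 := by
    funext x; rw [div_eq_mul_inv]
  replace htot : HasDerivAt (fun x : ℝ => 4 * x * Real.sqrt (Real.sqrt (1 - x ^ 2)) * (2 - x ^ 2)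
      * ((2 * Real.sqrt (1 - x ^ 2) + x ^ 2) ^ 2)⁻¹) _ t := htot
  simp only [Pi.inv_apply] at htot
  rw [hfun] at htot
  convert htot using 1
  -- now the algebraic identity
  have hsb : Real.sqrt (1 - t ^ 2) = b432 t ^ 2 := (b432_sq t).symm
  rw [hsb, Real.sqrt_sq hb.le]
  have hb4 : b432 t ^ 4 = 1 - t ^ 2 := b432_pow4 h.le
  have hbne : b432 t ≠ 0 := ne_of_gt hb
  have hDne : 2 * b432 t ^ 2 + t ^ 2 ≠ 0 := ne_of_gt hD
  field_simp
  ring_nf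
  linear_combination ((-8:ℝ)*t ^ 4 + (48:ℝ)*t ^ 2*b432 t ^ 2) * hb4

lemma f432_integrableOn : IntegrableOn f432 (Icc (0:ℝ) 1) := by
  have hg : IntervalIntegrable (fun x : ℝ => x ^ (-(3/4) : ℝ)) volume 0 1 :=
    intervalIntegrable_rpow' (by norm_num)
  have hg2 : IntervalIntegrable (fun x : ℝ => (1 - x) ^ (-(3/4) : ℝ)) volume 0 1 := by
    have := (hg.comp_sub_left 1).symm
    simpa using this
  have hgOn : IntegrableOn (fun x : ℝ => (1 - x) ^ (-(3/4) : ℝ)) (Icc (0:ℝ) 1) := by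
    rw [← intervalIntegrable_iff_integrableOn_Icc_of_le zero_le_one]
    exact hg2
  have hmeas : Measurable f432 := f432_measurable
  refine hgOn.integrable.mono hmeas.aestronglyMeasurable ?_
  rw [ae_restrict_iff' measurableSet_Icc]
  refine ae_of_all _ fun t ht => ?_
  obtain ⟨h0, h1⟩ := ht
  have hf0 : 0 ≤ f432 t := Real.rpow_nonneg (by nlinarith) _
  have hg0 : (0:ℝ) ≤ (1 - t) ^ (-(3/4) : ℝ) := Real.rpow_nonneg (by linarith) _
  rw [Real.norm_eq_abs, Real.norm_eq_abs, abs_of_nonneg hf0, abs_of_nonneg hg0]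
  rcases eq_or_lt_of_le h1 with h | h
  · subst h
    rw [f432]
    norm_num
  · exact Real.rpow_le_rpow_of_nonpos (by linarith) (by nlinarith) (by norm_num)

lemma f432_intervalIntegrable {p q : ℝ} (hp : p ∈ Icc (0:ℝ) 1) (hq : q ∈ Icc (0:ℝ) 1) :
    IntervalIntegrable f432 volume p q := by
  apply IntegrableOn.intervalIntegrable
  apply f432_integrableOn.mono_set
  rw [uIcc]
  exact Icc_subset_Icc (le_min hp.1 hq.1) (max_le hp.2 hq.2)

lemma f432_pos {t : ℝ} (h : t ^ 2 < 1) : 0 < f432 t :=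
  Real.rpow_pos_of_pos (by nlinarith) _

lemma F432_strictMonoOn : StrictMonoOn (fun y => ∫ t in (0:ℝ)..y, f432 t) (Icc (0:ℝ) 1) := by
  intro p hp q hq hpq
  have h1 : IntervalIntegrable f432 volume 0 p := f432_intervalIntegrable (by simp) hp
  have h2 : IntervalIntegrable f432 volume p q := f432_intervalIntegrable hp hq
  have hadd := integral_add_adjacent_intervals h1 h2
  have hpos : 0 < ∫ t in p..q, f432 t := by
    apply intervalIntegral_pos_of_pos_on h2 _ hpq
    intro z hz
    exact f432_pos (by nlinarith [hz.1, hz.2, hp.1, hq.2])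
  simp only []
  linarith [hadd]

lemma f432_smaf (z : ℝ) : StronglyMeasurableAtFilter f432 (nhds z) :=
  ⟨Set.univ, Filter.univ_mem, f432_measurable.aestronglyMeasurable.restrict⟩

lemma f432_contAt {z : ℝ} (h : z ^ 2 < 1) : ContinuousAt f432 z := by
  have : ContinuousAt (fun t : ℝ => (1 - t ^ 2) ^ (-(3/4) : ℝ)) z := by
    apply ContinuousAt.rpow_const
    · exact (continuous_const.sub (continuous_pow 2)).continuousAt
    · exact Or.inl (by simp; nlinarith)
  exact this

lemma b432_continuous : Continuous b432 := by
  unfold b432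
  fun_prop

lemma key432 {r : ℝ} (hr : r ∈ Icc 0 T432) :
    (∫ t in (0:ℝ)..(u432 r), f432 t) = 2 * ∫ t in (0:ℝ)..r, f432 t := by
  have hT1 := T432_lt_one
  have hr1 : r ≤ 1 := le_trans hr.2 hT1.le
  have h01 : uIcc (0:ℝ) 1 = Icc 0 1 := uIcc_of_le zero_le_one
  have hint : IntegrableOn f432 (uIcc (0:ℝ) 1) := by rw [h01]; exact f432_integrableOn
  have hprim : ContinuousOn (fun y => ∫ t in (0:ℝ)..y, f432 t) (uIcc (0:ℝ) 1) :=
    continuousOn_primitive_interval hint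
  have ucont : ContinuousOn u432 (Icc 0 r) := by
    intro y hy
    have hy2 : y ^ 2 ≤ 1 := by nlinarith [hy.1, hy.2, hr1]
    have hD := D432_ge_one hy2
    apply ContinuousAt.continuousWithinAt
    apply ContinuousAt.div
    · exact (((continuous_const.mul continuous_id).mul b432_continuous).mul
        (continuous_const.sub (continuous_pow 2))).continuousAt
    · exact (((continuous_const.mul (b432_continuous.pow 2)).add (continuous_pow 2)).pow 2).continuousAt
    · positivity
  have mapsto : MapsTo u432 (Icc 0 r) (uIcc (0:ℝ) 1) := by
    intro y hy
    rw [h01]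
    exact ⟨u432_nonneg hy.1 (le_trans hy.2 hr1), u432_le_one hy.1 (le_trans hy.2 hr1)⟩
  have part1 : ContinuousOn (fun y => ∫ t in (0:ℝ)..(u432 y), f432 t) (Icc 0 r) :=
    hprim.comp ucont mapsto
  have part2 : ContinuousOn (fun y => ∫ t in (0:ℝ)..y, f432 t) (Icc 0 r) :=
    hprim.mono (by rw [h01]; exact Icc_subset_Icc le_rfl hr1)
  have hcont : ContinuousOn
      (fun y => (∫ t in (0:ℝ)..(u432 y), f432 t) - 2 * ∫ t in (0:ℝ)..y, f432 t) (Icc 0 r) :=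
    part1.sub (continuousOn_const.mul part2)
  have hderiv : ∀ y ∈ Ico 0 r, HasDerivWithinAt
      (fun y => (∫ t in (0:ℝ)..(u432 y), f432 t) - 2 * ∫ t in (0:ℝ)..y, f432 t) 0 (Ici y) y := by
    intro y hy
    have hy0 : 0 ≤ y := hy.1
    have hyT : y < T432 := lt_of_lt_of_le hy.2 hr.2
    have hy1 : y < 1 := lt_of_lt_of_le hy.2 (le_trans hr.2 hT1.le)
    have hy2 : y ^ 2 < 1 := by nlinarith
    have hu0 : 0 ≤ u432 y := u432_nonneg hy0 hy1.le
    have hu1 : u432 y < 1 := u432_lt_one hy0 hyT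
    have hint1 : IntervalIntegrable f432 volume 0 (u432 y) :=
      f432_intervalIntegrable (by simp) ⟨hu0, hu1.le⟩
    have hint2 : IntervalIntegrable f432 volume 0 y :=
      f432_intervalIntegrable (by simp) ⟨hy0, hy1.le⟩
    have h_outer : HasDerivAt (fun z => ∫ t in (0:ℝ)..z, f432 t) (f432 (u432 y)) (u432 y) :=
      integral_hasDerivAt_right hint1 (f432_smaf _) (f432_contAt (by nlinarith))
    have h_comp := h_outer.comp y (hasDerivAt_u432 hy2)
    have h_inner : HasDerivAt (fun z => ∫ t in (0:ℝ)..z, f432 t) (f432 y) y :=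
      integral_hasDerivAt_right hint2 (f432_smaf _) (f432_contAt hy2)
    have htotal := h_comp.sub (h_inner.const_mul 2)
    have hval : f432 (u432 y) *
        (2 * (2 * b432 y ^ 2 - y ^ 2) ^ 3 / (b432 y ^ 3 * (2 * b432 y ^ 2 + y ^ 2) ^ 3))
        - 2 * f432 y = 0 := by
      rw [f432_u432 hy0 hyT, f432_eq hy2.le]
      have hw := w432_pos hy0 hyT
      have hD : (0:ℝ) < 2 * b432 y ^ 2 + y ^ 2 := lt_of_lt_of_le one_pos (D432_ge_one hy2.le)
      have hb := b432_pos hy2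
      field_simp
      ring
    rw [hval] at htotal
    exact htotal.hasDerivWithinAt
  have hconst := constant_of_has_deriv_right_zero hcont hderiv r (right_mem_Icc.2 hr.1)
  simp only [u432_zero, intervalIntegral.integral_same, mul_zero, sub_zero] at hconst
  linarith [hconst]

lemma b432_rpow {t : ℝ} (h : (0:ℝ) ≤ 1 - t ^ 2) : b432 t = (1 - t ^ 2) ^ ((1:ℝ)/4) := by
  unfold b432
  rw [Real.sqrt_eq_rpow, Real.sqrt_eq_rpow, ← Real.rpow_mul h]
  norm_num

/-- Theorem 2 (first half): double-angle formula for sin_{4/3,2} on [0, π_{4/3,2}/4]. -/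
theorem sin432_double_angle_first_half
    (F : ℝ → ℝ) (hF : ∀ s, F s = ∫ t in (0:ℝ)..s, (1 - t ^ 2) ^ (-(3/4) : ℝ))
    (pi432 : ℝ) (hpi : pi432 = 2 * F 1)
    (x : ℝ) (hx : x ∈ Set.Icc 0 (pi432 / 4))
    (s S : ℝ) (hs : s ∈ Set.Icc (0:ℝ) 1) (hS : S ∈ Set.Icc (0:ℝ) 1)
    (hFs : F s = x) (hFS : F S = 2 * x)
    (c : ℝ) (hc : c = (1 - s ^ 2) ^ ((3:ℝ)/4)) :
    S = 4 * s * c ^ ((1:ℝ)/3) * (1 + c ^ ((4:ℝ)/3)) / (2 * c ^ ((2:ℝ)/3) + s ^ 2) ^ 2 := by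
  have hFP : ∀ y, F y = ∫ t in (0:ℝ)..y, f432 t := hF
  have hT01 : T432 ∈ Icc (0:ℝ) 1 := ⟨T432_nonneg, T432_lt_one.le⟩
  -- F T432 = pi432 / 4
  have hFT : (∫ t in (0:ℝ)..(1:ℝ), f432 t) = 2 * ∫ t in (0:ℝ)..T432, f432 t := by
    have := key432 (right_mem_Icc.2 T432_nonneg)
    rwa [u432_T] at this
  -- s ≤ T432
  have hsT : s ≤ T432 := by
    by_contra hcon
    push_neg at hcon
    have h1 : (∫ t in (0:ℝ)..T432, f432 t) < ∫ t in (0:ℝ)..s, f432 t :=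
      F432_strictMonoOn hT01 hs hcon
    have h2 : x ≤ pi432 / 4 := hx.2
    rw [hpi, hFP 1] at h2
    rw [← hFP s, hFs] at h1
    linarith [hFT, h1, h2]
  -- F (u432 s) = 2 x
  have hkey : (∫ t in (0:ℝ)..(u432 s), f432 t) = 2 * x := by
    rw [key432 ⟨hs.1, hsT⟩, ← hFP s, hFs]
  -- S = u432 s by injectivity
  have hu01 : u432 s ∈ Icc (0:ℝ) 1 := ⟨u432_nonneg hs.1 hs.2, u432_le_one hs.1 hs.2⟩
  have hSu : S = u432 s := by
    apply F432_strictMonoOn.injOn hS hu01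
    simp only [← hFP S, ← hkey, hFS]
  -- convert the goal expression
  have h1s : (0:ℝ) ≤ 1 - s ^ 2 := by nlinarith [hs.1, hs.2]
  have hc13 : c ^ ((1:ℝ)/3) = b432 s := by
    rw [hc, ← Real.rpow_mul h1s, b432_rpow h1s]
    norm_num
  have hc23 : c ^ ((2:ℝ)/3) = b432 s ^ 2 := by
    rw [hc, ← Real.rpow_mul h1s, b432_sq, Real.sqrt_eq_rpow]
    norm_num
  have hc43 : c ^ ((4:ℝ)/3) = 1 - s ^ 2 := by
    rw [hc, ← Real.rpow_mul h1s]
    norm_num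
  have hb4 : b432 s ^ 4 = 1 - s ^ 2 := b432_pow4 (by nlinarith [hs.1, hs.2])
  rw [hSu, hc13, hc23, hc43, u432]
  rw [show (1:ℝ) + (1 - s ^ 2) = 2 - s ^ 2 by ring]
end

section
/- Let p > 1 and p* = p/(p−1). Let F₁(s) = ∫₀ˢ (1 − t^p)^{−1/p*} dt and F₂(s) = ∫₀ˢ (1 − t^p)^{−1/2} dt for s ∈ [0,1], with π_{p*,p} = 2F₁(1). For every x ∈ [0, π_{p*,p}/2], if s, σ ∈ [0,1] satisfy F₁(s) = x and F₂(σ) = 2^{2/p}·x, then σ = 2^{2/p}·s·(1 − s^p)^{1/p}. -/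
open Set MeasureTheory intervalIntegral Real

private lemma aux_integ (p c : ℝ) (hp : 1 ≤ p) (hc0 : 0 < c) (hc1 : c < 1) :
    IntervalIntegrable (fun t : ℝ => (1 - t ^ p) ^ (-c)) volume 0 1 := by
  have hmaj : IntervalIntegrable (fun t : ℝ => (1 - t) ^ (-c)) volume 0 1 := by
    have h := (intervalIntegrable_rpow' (a := 0) (b := 1) (r := -c) (by linarith)).comp_sub_left 1
    simpa using h.symm
  have hmeas : Measurable (fun t : ℝ => (1 - t ^ p) ^ (-c)) := by measurability
  refine hmaj.mono_fun hmeas.aestronglyMeasurable ?_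
  rw [uIoc_of_le (zero_le_one)]
  filter_upwards [ae_restrict_mem measurableSet_Ioc] with t ht
  obtain ⟨ht0, ht1⟩ := ht
  have htp1 : t ^ p ≤ 1 := Real.rpow_le_one ht0.le ht1 (by linarith)
  have h1 : (0:ℝ) ≤ (1 - t ^ p) ^ (-c) := Real.rpow_nonneg (by linarith) _
  have h2 : (0:ℝ) ≤ (1 - t) ^ (-c) := Real.rpow_nonneg (by linarith) _
  rw [Real.norm_eq_abs, Real.norm_eq_abs, abs_of_nonneg h1, abs_of_nonneg h2]
  rcases eq_or_lt_of_le ht1 with h | h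
  · have e : (1:ℝ) - t ^ p = 0 := by rw [h, Real.one_rpow]; ring
    rw [e, h, sub_self, Real.zero_rpow (by intro hh; simp at hh; linarith : -c ≠ 0)]
  · have hle : 1 - t ≤ 1 - t ^ p := by
      have : t ^ p ≤ t ^ (1:ℝ) := Real.rpow_le_rpow_of_exponent_ge ht0 h.le hp
      rw [Real.rpow_one] at this; linarith
    exact Real.rpow_le_rpow_of_nonpos (by linarith) hle (by linarith)

private lemma aux_lt (p c a b : ℝ) (hp : 1 ≤ p) (hc0 : 0 < c) (hc1 : c < 1)
    (ha : 0 ≤ a) (hab : a < b) (hb : b ≤ 1) :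
    (∫ t in (0:ℝ)..a, (1 - t ^ p) ^ (-c)) < ∫ t in (0:ℝ)..b, (1 - t ^ p) ^ (-c) := by
  have hi := aux_integ p c hp hc0 hc1
  have hmem : ∀ y : ℝ, 0 ≤ y → y ≤ 1 → y ∈ uIcc (0:ℝ) 1 := by
    intro y h1 h2; rw [uIcc_of_le zero_le_one]; exact ⟨h1, h2⟩
  have h0a : IntervalIntegrable (fun t : ℝ => (1 - t ^ p) ^ (-c)) volume 0 a :=
    hi.mono_set (uIcc_subset_uIcc (hmem 0 le_rfl zero_le_one) (hmem a ha (by linarith)))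
  have hab' : IntervalIntegrable (fun t : ℝ => (1 - t ^ p) ^ (-c)) volume a b :=
    hi.mono_set (uIcc_subset_uIcc (hmem a ha (by linarith)) (hmem b (by linarith) hb))
  have hsplit := integral_add_adjacent_intervals h0a hab'
  have hpos : (0:ℝ) < ∫ t in a..b, (1 - t ^ p) ^ (-c) := by
    refine intervalIntegral_pos_of_pos_on hab' (fun x hx => ?_) hab
    have hx0 : 0 < x := lt_of_le_of_lt ha hx.1
    have hx1 : x < 1 := lt_of_lt_of_le hx.2 hb
    have : x ^ p < 1 := Real.rpow_lt_one hx0.le hx1 (by linarith)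
    exact Real.rpow_pos_of_pos (by linarith) _
  linarith

private lemma aux_deriv (p c : ℝ) (hp : 1 ≤ p) (hc0 : 0 < c) (hc1 : c < 1)
    {t₀ : ℝ} (h0 : 0 ≤ t₀) (h1 : t₀ < 1) :
    HasDerivAt (fun u => ∫ t in (0:ℝ)..u, (1 - t ^ p) ^ (-c)) ((1 - t₀ ^ p) ^ (-c)) t₀ := by
  have hmeas : Measurable (fun t : ℝ => (1 - t ^ p) ^ (-c)) := by measurability
  refine integral_hasDerivAt_right ?_ ⟨univ, Filter.univ_mem, hmeas.aestronglyMeasurable.restrict⟩ ?_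
  · refine (aux_integ p c hp hc0 hc1).mono_set (uIcc_subset_uIcc ?_ ?_) <;>
      rw [uIcc_of_le zero_le_one]
    · exact ⟨le_rfl, zero_le_one⟩
    · exact ⟨h0, h1.le⟩
  · have hne : (1:ℝ) - t₀ ^ p ≠ 0 := by
      have : t₀ ^ p < 1 := by
        rcases eq_or_lt_of_le h0 with h | h
        · rw [← h, Real.zero_rpow (by linarith : p ≠ 0)]; norm_num
        · exact Real.rpow_lt_one h0 h1 (by linarith)
      linarith
    have c1 : ContinuousAt (fun t : ℝ => 1 - t ^ p) t₀ :=
      continuousAt_const.sub (Real.continuousAt_rpow_const t₀ p (Or.inr (by linarith)))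
    exact c1.rpow_const (Or.inl hne)


private lemma aux_pow_eq_one {p x : ℝ} (hp : 0 < p) (hx : 0 ≤ x) (h : x ^ p = 1) : x = 1 := by
  rcases lt_trichotomy x 1 with h1 | h1 | h1
  · have := Real.rpow_lt_one hx h1 hp; linarith
  · exact h1
  · have := Real.one_lt_rpow_iff_of_pos (lt_trans one_pos h1) (y := p)
    have h2 : 1 < x ^ p := this.mpr (Or.inl ⟨h1, hp⟩)
    linarith

private lemma aux_gpow (p : ℝ) (hp : 1 < p) {u : ℝ} (hu0 : 0 ≤ u) (hu1 : u ≤ 1) :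
    (2 ^ ((2:ℝ)/p) * (u * (1 - u ^ p) ^ (1/p))) ^ p = 4 * (u ^ p * (1 - u ^ p)) := by
  have hp0 : (0:ℝ) < p := by linarith
  have hB0 : (0:ℝ) ≤ 1 - u ^ p := by
    have := Real.rpow_le_one hu0 hu1 hp0.le; linarith
  have h2 : (0:ℝ) ≤ 2 ^ ((2:ℝ)/p) := (Real.rpow_pos_of_pos two_pos _).le
  rw [Real.mul_rpow h2 (mul_nonneg hu0 (Real.rpow_nonneg hB0 _)),
    Real.mul_rpow hu0 (Real.rpow_nonneg hB0 _),
    ← Real.rpow_mul (by norm_num : (0:ℝ) ≤ 2),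
    ← Real.rpow_mul hB0]
  have e1 : (2:ℝ)/p * p = 2 := by field_simp
  have e2 : (1:ℝ)/p * p = 1 := by field_simp
  rw [e1, e2, Real.rpow_one]
  have : (2:ℝ) ^ (2:ℝ) = 4 := by
    rw [show ((2:ℝ):ℝ) = ((2:ℕ):ℝ) by norm_num]
    rw [Real.rpow_natCast]
    norm_num
  rw [this]

private lemma aux_g_mem (p : ℝ) (hp : 1 < p) {u : ℝ} (hu0 : 0 ≤ u) (hu1 : u ≤ 1) :
    0 ≤ 2 ^ ((2:ℝ)/p) * (u * (1 - u ^ p) ^ (1/p)) ∧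
      2 ^ ((2:ℝ)/p) * (u * (1 - u ^ p) ^ (1/p)) ≤ 1 := by
  have hp0 : (0:ℝ) < p := by linarith
  have hB0 : (0:ℝ) ≤ 1 - u ^ p := by
    have := Real.rpow_le_one hu0 hu1 hp0.le; linarith
  have hg0 : 0 ≤ 2 ^ ((2:ℝ)/p) * (u * (1 - u ^ p) ^ (1/p)) :=
    mul_nonneg (Real.rpow_pos_of_pos two_pos _).le (mul_nonneg hu0 (Real.rpow_nonneg hB0 _))
  refine ⟨hg0, ?_⟩
  by_contra hgt
  push_neg at hgt
  have h1 : (1:ℝ) < (2 ^ ((2:ℝ)/p) * (u * (1 - u ^ p) ^ (1/p))) ^ p :=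
    (Real.one_lt_rpow_iff_of_pos (lt_trans one_pos hgt)).mpr (Or.inl ⟨hgt, hp0⟩)
  rw [aux_gpow p hp hu0 hu1] at h1
  have hA0 : (0:ℝ) ≤ u ^ p := Real.rpow_nonneg hu0 _
  nlinarith [sq_nonneg (1 - 2 * u ^ p)]

private lemma aux_key (p c₁ : ℝ) (hp : 1 < p)
    (hc₁0 : 0 < c₁) (hc₁1 : c₁ < 1) (hce : -c₁ = 1/p - 1) :
    ∀ y ∈ Icc (0:ℝ) ((2:ℝ) ^ (-(1/p))),
      (∫ t in (0:ℝ)..(2 ^ ((2:ℝ)/p) * (y * (1 - y ^ p) ^ (1/p))), (1 - t ^ p) ^ (-(1/2):ℝ))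
        = 2 ^ ((2:ℝ)/p) * ∫ t in (0:ℝ)..y, (1 - t ^ p) ^ (-c₁) := by
  have hp0 : (0:ℝ) < p := by linarith
  set r := (2:ℝ) ^ (-(1/p)) with hr
  have hr0 : 0 < r := Real.rpow_pos_of_pos two_pos _
  have hr1 : r < 1 := Real.rpow_lt_one_of_one_lt_of_neg one_lt_two (by simp [hp0])
  have hrp : r ^ p = 1/2 := by
    rw [hr, ← Real.rpow_mul (by norm_num : (0:ℝ) ≤ 2)]
    have e : -(1/p) * p = -1 := by field_simp
    rw [e, Real.rpow_neg_one]; norm_num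
  set g : ℝ → ℝ := fun u => 2 ^ ((2:ℝ)/p) * (u * (1 - u ^ p) ^ (1/p)) with hgdef
  have h2pos : (0:ℝ) < 2 ^ ((2:ℝ)/p) := Real.rpow_pos_of_pos two_pos _
  refine eq_of_has_deriv_right_eq (a := 0) (b := r)
    (f' := fun y => 2 ^ ((2:ℝ)/p) * (1 - y ^ p) ^ (-c₁))
    (f := fun y => ∫ t in (0:ℝ)..(g y), (1 - t ^ p) ^ (-(1/2):ℝ))
    (g := fun y => 2 ^ ((2:ℝ)/p) * ∫ t in (0:ℝ)..y, (1 - t ^ p) ^ (-c₁))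
    ?_ ?_ ?_ ?_ ?_
  · -- derivf
    intro y hy
    obtain ⟨hy0, hyr⟩ := hy
    have hy1 : y < 1 := hyr.trans hr1
    have hA : y ^ p < 1/2 := by
      have := Real.rpow_lt_rpow hy0 hyr hp0
      rwa [hrp] at this
    have hA0 : (0:ℝ) ≤ y ^ p := Real.rpow_nonneg hy0 _
    have hB : (0:ℝ) < 1 - y ^ p := by linarith
    have hgy0 : 0 ≤ g y := (aux_g_mem p hp hy0 hy1.le).1
    have hgp : (g y) ^ p = 4 * (y ^ p * (1 - y ^ p)) := aux_gpow p hp hy0 hy1.le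
    have hgy1 : g y < 1 := by
      by_contra hge
      push_neg at hge
      have h1 : (1:ℝ) ^ p ≤ (g y) ^ p := Real.rpow_le_rpow zero_le_one hge hp0.le
      rw [Real.one_rpow, hgp] at h1
      nlinarith [sq_nonneg (1 - 2 * y ^ p)]
    have hd2 : HasDerivAt (fun u => ∫ t in (0:ℝ)..u, (1 - t ^ p) ^ (-(1/2):ℝ))
        ((1 - (g y) ^ p) ^ (-(1/2):ℝ)) (g y) :=
      aux_deriv p (1/2) hp.le one_half_pos one_half_lt_one hgy0 hgy1
    have h1 : HasDerivAt (fun u : ℝ => u ^ p) (p * y ^ (p-1)) y :=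
      Real.hasDerivAt_rpow_const (Or.inr hp.le)
    have h2 : HasDerivAt (fun u : ℝ => 1 - u ^ p) (-(p * y ^ (p-1))) y := by
      have h2' := (hasDerivAt_const y (1:ℝ)).sub h1
      simp only [zero_sub] at h2'
      exact h2'
    have h3 : HasDerivAt (fun u : ℝ => (1 - u ^ p) ^ ((1:ℝ)/p))
        ((-(p * y ^ (p-1))) * (1/p) * (1 - y ^ p) ^ ((1:ℝ)/p - 1)) y :=
      h2.rpow_const (Or.inl hB.ne')
    have h4 : HasDerivAt (fun u : ℝ => u * (1 - u ^ p) ^ ((1:ℝ)/p))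
        (1 * (1 - y ^ p) ^ ((1:ℝ)/p) +
          y * ((-(p * y ^ (p-1))) * (1/p) * (1 - y ^ p) ^ ((1:ℝ)/p - 1))) y :=
      (hasDerivAt_id' (x := y)).mul h3
    have h5 := h4.const_mul (2 ^ ((2:ℝ)/p))
    have hcomp := hd2.comp y h5
    have hC : (0:ℝ) < 1 - 2 * y ^ p := by linarith
    have halg : (1 - (g y) ^ p) ^ (-(1/2):ℝ) *
        (2 ^ ((2:ℝ)/p) * (1 * (1 - y ^ p) ^ ((1:ℝ)/p) +
          y * ((-(p * y ^ (p-1))) * (1/p) * (1 - y ^ p) ^ ((1:ℝ)/p - 1))))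
        = 2 ^ ((2:ℝ)/p) * (1 - y ^ p) ^ (-c₁) := by
      have h1' : 1 - (g y) ^ p = (1 - 2 * y ^ p) ^ 2 := by rw [hgp]; ring
      have hCrw : ((1 - 2 * y ^ p) ^ 2 : ℝ) ^ (-(1/2):ℝ) = (1 - 2 * y ^ p)⁻¹ := by
        rw [← Real.rpow_natCast (1 - 2 * y ^ p) 2, ← Real.rpow_mul hC.le]
        norm_num [Real.rpow_neg_one]
      have hyy : y * y ^ (p-1) = y ^ p := by
        rcases eq_or_lt_of_le hy0 with h | h
        · rw [← h]; simp [Real.zero_rpow hp0.ne']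
        · nth_rewrite 1 [← Real.rpow_one y]
          rw [← Real.rpow_add h]; norm_num
      have hBsplit : (1 - y ^ p) ^ ((1:ℝ)/p) =
          (1 - y ^ p) ^ ((1:ℝ)/p - 1) * (1 - y ^ p) := by
        conv_lhs => rw [show (1:ℝ)/p = ((1:ℝ)/p - 1) + 1 by ring]
        rw [Real.rpow_add hB, Real.rpow_one]
      have e0 : y * ((-(p * y ^ (p-1))) * (1/p) * (1 - y ^ p) ^ ((1:ℝ)/p - 1)) =
          -(p * (1/p)) * ((y * y ^ (p-1)) * (1 - y ^ p) ^ ((1:ℝ)/p - 1)) := by ring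
      have ep : -(p * (1/p)) = (-1 : ℝ) := by field_simp
      rw [h1', hCrw, show -c₁ = (1:ℝ)/p - 1 from hce, hBsplit, e0, hyy, ep]
      field_simp
      ring
    rw [halg] at hcomp
    exact hcomp.hasDerivWithinAt
  · -- derivg
    intro y hy
    exact ((aux_deriv p c₁ hp.le hc₁0 hc₁1 hy.1
      (hy.2.trans hr1)).const_mul (2 ^ ((2:ℝ)/p))).hasDerivWithinAt
  · -- fcont
    have hFc : ContinuousOn (fun b => ∫ t in (0:ℝ)..b, (1 - t ^ p) ^ (-(1/2):ℝ)) (Icc 0 1) := by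
      have h := continuousOn_primitive_interval'
        (aux_integ p (1/2) hp.le one_half_pos one_half_lt_one)
        (by rw [uIcc_of_le (zero_le_one)]; exact ⟨le_rfl, zero_le_one⟩)
      rwa [uIcc_of_le (zero_le_one)] at h
    have hgc : ContinuousOn g (Icc 0 r) := by
      refine continuousOn_const.mul (continuousOn_id.mul (ContinuousOn.rpow_const ?_ ?_))
      · exact continuousOn_const.sub
          (fun u _ => (Real.continuousAt_rpow_const u p (Or.inr hp0.le)).continuousWithinAt)
      · intro u hu
        left
        have : u ^ p ≤ r ^ p := Real.rpow_le_rpow hu.1 hu.2 hp0.le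
        rw [hrp] at this
        intro hzero
        linarith
    exact hFc.comp hgc (fun u hu =>
      ⟨(aux_g_mem p hp hu.1 (hu.2.trans hr1.le)).1, (aux_g_mem p hp hu.1 (hu.2.trans hr1.le)).2⟩)
  · -- gcont
    refine continuousOn_const.mul ?_
    have h := continuousOn_primitive_interval'
      (aux_integ p c₁ hp.le hc₁0 hc₁1)
      (by rw [uIcc_of_le (zero_le_one)]; exact ⟨le_rfl, zero_le_one⟩)
    rw [uIcc_of_le (zero_le_one)] at h
    exact h.mono (Icc_subset_Icc le_rfl hr1.le)
  · -- base
    have hg0 : g 0 = 0 := by simp [hgdef]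
    simp only [hg0, intervalIntegral.integral_same, mul_zero]


/-- Lemma 1 (sine part): sin_{2,p}(2^{2/p} x) = 2^{2/p} sin_{p*,p} x · cos_{p*,p}^{p*-1} x. -/
theorem multiple_angle_sine_part
    (p pst : ℝ) (hp : 1 < p) (hpst : pst = p / (p - 1))
    (F₁ F₂ : ℝ → ℝ)
    (hF₁ : ∀ s, F₁ s = ∫ t in (0:ℝ)..s, (1 - t ^ p) ^ (-(1/pst)))
    (hF₂ : ∀ s, F₂ s = ∫ t in (0:ℝ)..s, (1 - t ^ p) ^ (-(1/2) : ℝ))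
    (pipstp : ℝ) (hpi : pipstp = 2 * F₁ 1)
    (x : ℝ) (hx : x ∈ Set.Icc 0 (pipstp / 2))
    (s σ : ℝ) (hs : s ∈ Set.Icc (0:ℝ) 1) (hσ : σ ∈ Set.Icc (0:ℝ) 1)
    (hFs : F₁ s = x) (hFσ : F₂ σ = 2 ^ ((2:ℝ)/p) * x) :
    σ = 2 ^ ((2:ℝ)/p) * s * (1 - s ^ p) ^ (1/p) := by
  have hp0 : (0:ℝ) < p := by linarith
  set c₁ := 1/pst with hc
  have hc₁0 : 0 < c₁ := by
    rw [hc, hpst, one_div_div]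
    exact div_pos (by linarith) hp0
  have hc₁1 : c₁ < 1 := by
    rw [hc, hpst, one_div_div, div_lt_one hp0]; linarith
  have hce : -c₁ = 1/p - 1 := by
    rw [hc, hpst, one_div_div]
    field_simp
    ring
  have h2pos : (0:ℝ) < 2 ^ ((2:ℝ)/p) := Real.rpow_pos_of_pos two_pos _
  set r := (2:ℝ) ^ (-(1/p)) with hr
  have hr0 : 0 < r := Real.rpow_pos_of_pos two_pos _
  have hr1 : r < 1 := Real.rpow_lt_one_of_one_lt_of_neg one_lt_two (by simp [hp0])
  have hrp : r ^ p = 1/2 := by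
    rw [hr, ← Real.rpow_mul (by norm_num : (0:ℝ) ≤ 2)]
    have e : -(1/p) * p = -1 := by field_simp
    rw [e, Real.rpow_neg_one]; norm_num
  have key := aux_key p c₁ hp hc₁0 hc₁1 hce
  have hFσ' : (∫ t in (0:ℝ)..σ, (1 - t ^ p) ^ (-(1/2):ℝ)) = 2 ^ ((2:ℝ)/p) * x := by
    rw [← hF₂ σ]; exact hFσ
  have hFs' : (∫ t in (0:ℝ)..s, (1 - t ^ p) ^ (-c₁)) = x := by
    rw [← hF₁ s]; exact hFs
  rcases le_or_gt s r with hsr | hsr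
  · -- s ≤ r : use injectivity of the primitive
    have hkey := key s ⟨hs.1, hsr⟩
    rw [hFs'] at hkey
    have hg01 := aux_g_mem p hp hs.1 hs.2
    rw [mul_assoc]
    by_contra hne
    rcases lt_or_gt_of_ne hne with hlt | hgt
    · have hstep := aux_lt p (1/2) σ (2 ^ ((2:ℝ)/p) * (s * (1 - s ^ p) ^ (1/p)))
        hp.le one_half_pos one_half_lt_one hσ.1 hlt hg01.2
      rw [hFσ', hkey] at hstep
      exact lt_irrefl _ hstep
    · have hstep := aux_lt p (1/2) (2 ^ ((2:ℝ)/p) * (s * (1 - s ^ p) ^ (1/p))) σ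
        hp.le one_half_pos one_half_lt_one hg01.1 hgt hσ.2
      rw [hFσ', hkey] at hstep
      exact lt_irrefl _ hstep
  · -- r < s : contradiction with σ ≤ 1
    exfalso
    have hlt := aux_lt p c₁ r s hp.le hc₁0 hc₁1 hr0.le hsr hs.2
    have hgr : (2 ^ ((2:ℝ)/p) * (r * (1 - r ^ p) ^ (1/p))) = 1 := by
      apply aux_pow_eq_one hp0 (aux_g_mem p hp hr0.le hr1.le).1
      rw [aux_gpow p hp hr0.le hr1.le, hrp]; norm_num
    have hkeyr := key r ⟨hr0.le, le_rfl⟩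
    rw [hgr] at hkeyr
    have hσ1 : (∫ t in (0:ℝ)..σ, (1 - t ^ p) ^ (-(1/2):ℝ))
        ≤ ∫ t in (0:ℝ)..(1:ℝ), (1 - t ^ p) ^ (-(1/2):ℝ) := by
      rcases eq_or_lt_of_le hσ.2 with h | h
      · rw [h]
      · exact (aux_lt p (1/2) σ 1 hp.le one_half_pos one_half_lt_one hσ.1 h le_rfl).le
    have h1 : 2 ^ ((2:ℝ)/p) * x ≤ 2 ^ ((2:ℝ)/p) * ∫ t in (0:ℝ)..r, (1 - t ^ p) ^ (-c₁) := by
      rw [← hkeyr, ← hFσ']; exact hσ1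
    have h2 : 2 ^ ((2:ℝ)/p) * (∫ t in (0:ℝ)..r, (1 - t ^ p) ^ (-c₁))
        < 2 ^ ((2:ℝ)/p) * x := by
      rw [← hFs']
      exact mul_lt_mul_of_pos_left hlt h2pos
    linarith
end

section
/- Let p > 1 and p* = p/(p−1). Let F₁(s) = ∫₀ˢ (1 − t^p)^{−1/p*} dt and F₂(s) = ∫₀ˢ (1 − t^p)^{−1/2} dt for s ∈ [0,1], with π_{p*,p} = 2F₁(1). For every x ∈ [0, π_{p*,p}/2], if s, σ ∈ [0,1] satisfy F₁(s) = x and F₂(σ) = 2^{2/p}·x, then (1 − σ^p)^{1/2} = 1 − 2·s^p. -/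
open MeasureTheory intervalIntegral Set Real Filter

namespace MAC


/-- The substitution function: σ = g(s) = 2^{2/p} s (1-s^p)^{1/p}. -/
noncomputable def gfun (p u : ℝ) : ℝ := 2 ^ ((2:ℝ)/p) * (u * (1 - u ^ p) ^ (1/p))

lemma integrable01 {p : ℝ} (hp : 1 < p) {e : ℝ} (he : -1 < e) (he0 : e < 0) :
    IntervalIntegrable (fun t => (1 - t ^ p) ^ e) volume 0 1 := by
  have hp0 : (0:ℝ) < p := lt_trans one_pos hp
  have hdom : IntervalIntegrable (fun t : ℝ => (1 - t) ^ e) volume 0 1 := by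
    have h := (intervalIntegrable_rpow' (a := 0) (b := 1) he).comp_sub_left 1
    simpa using h.symm
  refine hdom.mono_fun ?_ ?_
  · apply Measurable.aestronglyMeasurable
    exact (measurable_const.sub (measurable_id.pow_const p)).pow_const e
  · rw [uIoc_of_le (zero_le_one : (0:ℝ) ≤ 1)]
    refine (ae_restrict_iff' measurableSet_Ioc).2 (Eventually.of_forall fun t ht => ?_)
    have ht0 : 0 < t := ht.1
    have ht1 : t ≤ 1 := ht.2
    rcases eq_or_lt_of_le ht1 with h1 | h1
    · subst h1
      simp [Real.one_rpow, Real.zero_rpow he0.ne]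
    · have htp : t ^ p ≤ t := by
        calc t ^ p ≤ t ^ (1:ℝ) := Real.rpow_le_rpow_of_exponent_ge ht0 h1.le hp.le
        _ = t := Real.rpow_one t
      have h2 : (0:ℝ) < 1 - t := by linarith
      have h3 : 1 - t ≤ 1 - t ^ p := by linarith
      have hb : (1 - t ^ p) ^ e ≤ (1 - t) ^ e :=
        Real.rpow_le_rpow_of_nonpos h2 h3 he0.le
      have hnn : 0 ≤ (1 - t ^ p) ^ e := Real.rpow_nonneg (by linarith) e
      simp only [Real.norm_eq_abs, abs_of_nonneg hnn,
        abs_of_nonneg (Real.rpow_nonneg h2.le e)]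
      exact hb

lemma integrable_aux {p : ℝ} (hp : 1 < p) {e : ℝ} (he : -1 < e) (he0 : e < 0)
    {a b : ℝ} (ha : 0 ≤ a) (ha1 : a ≤ 1) (hb : 0 ≤ b) (hb1 : b ≤ 1) :
    IntervalIntegrable (fun t => (1 - t ^ p) ^ e) volume a b :=
  (integrable01 hp he he0).mono_set
    (by rw [uIcc_of_le (zero_le_one : (0:ℝ) ≤ 1)]
        exact uIcc_subset_Icc ⟨ha, ha1⟩ ⟨hb, hb1⟩)

lemma integral_pos_aux {p : ℝ} (hp : 1 < p) {e : ℝ} (he : -1 < e) (he0 : e < 0)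
    {a b : ℝ} (ha : 0 ≤ a) (hab : a < b) (hb1 : b ≤ 1) :
    0 < ∫ t in a..b, (1 - t ^ p) ^ e := by
  have hp0 : (0:ℝ) < p := lt_trans one_pos hp
  refine intervalIntegral_pos_of_pos_on
    (integrable_aux hp he he0 ha (le_trans hab.le hb1) (le_trans ha hab.le) hb1)
    (fun t ht => ?_) hab
  have ht0 : 0 ≤ t := le_trans ha ht.1.le
  have ht1 : t < 1 := lt_of_lt_of_le ht.2 hb1
  have : t ^ p < 1 := Real.rpow_lt_one ht0 ht1 hp0
  exact Real.rpow_pos_of_pos (by linarith) e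




lemma two_rpow_two : (2:ℝ) ^ ((2:ℝ):ℝ) = 4 := by
  rw [show ((2:ℝ):ℝ) = ((2:ℕ):ℝ) by norm_num, Real.rpow_natCast]; norm_num

lemma g_hasDeriv {p : ℝ} (hp : 1 < p) {u : ℝ} (hu0 : 0 ≤ u) (hu1 : u < 1) :
    HasDerivAt (gfun p)
      (2 ^ ((2:ℝ)/p) * ((1 - 2 * u ^ p) * (1 - u ^ p) ^ (1/p - 1))) u := by
  have hp0 : (0:ℝ) < p := lt_trans one_pos hp
  have hb : (0:ℝ) < 1 - u ^ p := by
    have := Real.rpow_lt_one hu0 hu1 hp0; linarith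
  have h1 : HasDerivAt (fun u : ℝ => u ^ p) (p * u ^ (p - 1)) u :=
    Real.hasDerivAt_rpow_const (Or.inr hp.le)
  have h2 : HasDerivAt (fun u : ℝ => 1 - u ^ p) (-(p * u ^ (p - 1))) u := by
    have h := (hasDerivAt_const u (1:ℝ)).sub h1; rw [zero_sub] at h; exact h
  have h3 : HasDerivAt (fun u : ℝ => (1 - u ^ p) ^ (1/p))
      (-(p * u ^ (p - 1)) * (1/p) * (1 - u ^ p) ^ (1/p - 1)) u :=
    h2.rpow_const (Or.inl hb.ne')
  have h4 := ((hasDerivAt_id u).mul h3).const_mul ((2:ℝ) ^ ((2:ℝ)/p))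
  have hup : u ^ (p - 1) * u = u ^ p := by
    nth_rewrite 2 [← Real.rpow_one u]
    rw [← Real.rpow_add' hu0 (by linarith)]
    ring_nf
  have hA : (1 - u ^ p) ^ (1/p - 1 : ℝ) * (1 - u ^ p) = (1 - u ^ p) ^ (1/p : ℝ) := by
    nth_rewrite 2 [← Real.rpow_one (1 - u ^ p)]
    rw [← Real.rpow_add hb]
    ring_nf
  convert h4 using 1
  · rfl
  · rfl
  · rfl
  rw [id_eq, ← hA]
  set A := (1 - u ^ p) ^ (1/p - 1 : ℝ) with hAdef
  rw [show u * (-(p * u ^ (p-1)) * (1/p) * A) = -(u ^ (p-1) * u) * A * (p * (1/p)) by ring,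
      hup, mul_one_div_cancel hp0.ne']
  ring

lemma g_pow {p : ℝ} (hp : 1 < p) {u : ℝ} (hu0 : 0 ≤ u) (hu : u ^ p ≤ 1) :
    gfun p u ^ p = 4 * (u ^ p * (1 - u ^ p)) := by
  have hp0 : (0:ℝ) < p := lt_trans one_pos hp
  have hb : (0:ℝ) ≤ 1 - u ^ p := by linarith
  unfold gfun
  rw [Real.mul_rpow (by positivity) (by positivity),
      Real.mul_rpow hu0 (Real.rpow_nonneg hb _),
      ← Real.rpow_mul (by norm_num : (0:ℝ) ≤ 2),
      ← Real.rpow_mul hb,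
      div_mul_cancel₀ _ hp0.ne', one_div_mul_cancel hp0.ne', Real.rpow_one,
      two_rpow_two]
  try ring






lemma key {p : ℝ} (hp : 1 < p) {s : ℝ} (hs0 : 0 ≤ s) (hs2 : s ^ p < 1/2) :
    (∫ t in (0:ℝ)..(gfun p s), (1 - t ^ p) ^ ((-(1/2)) : ℝ))
      = 2 ^ ((2:ℝ)/p) * ∫ t in (0:ℝ)..s, (1 - t ^ p) ^ (1/p - 1) := by
  have hp0 : (0:ℝ) < p := lt_trans one_pos hp
  have hs1 : s < 1 := by
    by_contra h
    push_neg at h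
    have : (1:ℝ) ≤ s ^ p := Real.one_le_rpow h hp0.le
    linarith
  have hmem : ∀ u ∈ Set.uIcc (0:ℝ) s, 0 ≤ u ∧ u ^ p < 1/2 := by
    intro u hu
    rw [Set.uIcc_of_le hs0] at hu
    refine ⟨hu.1, lt_of_le_of_lt ?_ hs2⟩
    exact Real.rpow_le_rpow hu.1 hu.2 hp0.le
  have cpow : ContinuousOn (fun u : ℝ => u ^ p) (Set.uIcc (0:ℝ) s) :=
    continuousOn_id.rpow_const (fun x _ => Or.inr hp0.le)
  have hderiv : ∀ u ∈ Set.uIcc (0:ℝ) s,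
      HasDerivAt (gfun p) (2 ^ ((2:ℝ)/p) * ((1 - 2 * u ^ p) * (1 - u ^ p) ^ (1/p - 1))) u := by
    intro u hu
    obtain ⟨hu0, hu2⟩ := hmem u hu
    have hu1 : u < 1 := by
      by_contra h
      push_neg at h
      have : (1:ℝ) ≤ u ^ p := Real.one_le_rpow h hp0.le
      linarith
    exact g_hasDeriv hp hu0 hu1
  have hcont' : ContinuousOn
      (fun u : ℝ => 2 ^ ((2:ℝ)/p) * ((1 - 2 * u ^ p) * (1 - u ^ p) ^ (1/p - 1)))
      (Set.uIcc (0:ℝ) s) := by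
    refine continuousOn_const.mul (ContinuousOn.mul ?_ ?_)
    · exact continuousOn_const.sub (continuousOn_const.mul cpow)
    · refine (continuousOn_const.sub cpow).rpow_const (fun u hu => Or.inl ?_)
      have := (hmem u hu).2
      intro h; simp only [Pi.sub_apply] at h; rw [sub_eq_zero] at h; rw [← h] at this; linarith
  have himg : ∀ t ∈ gfun p '' Set.uIcc (0:ℝ) s, (0:ℝ) < 1 - t ^ p := by
    rintro t ⟨u, hu, rfl⟩
    obtain ⟨hu0, hu2⟩ := hmem u hu
    rw [g_pow hp hu0 (by linarith)]
    nlinarith [Real.rpow_nonneg hu0 p]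
  have hgcont : ContinuousOn (fun t : ℝ => (1 - t ^ p) ^ ((-(1/2)) : ℝ))
      (gfun p '' Set.uIcc (0:ℝ) s) := by
    refine (continuousOn_const.sub
      (continuousOn_id.rpow_const (fun x _ => Or.inr hp0.le))).rpow_const
      (fun t ht => Or.inl (ne_of_gt (himg t ht)))
  have hsub := intervalIntegral.integral_comp_smul_deriv' (a := 0) (b := s)
    hderiv hcont' hgcont
  have hg0 : gfun p 0 = 0 := by simp [gfun]
  rw [hg0] at hsub
  rw [← hsub]
  rw [← intervalIntegral.integral_const_mul]
  apply intervalIntegral.integral_congr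
  intro u hu
  obtain ⟨hu0, hu2⟩ := hmem u hu
  have h2y : (0:ℝ) < 1 - 2 * u ^ p := by linarith
  have hgp : 1 - gfun p u ^ p = (1 - 2 * u ^ p) ^ (2:ℕ) := by
    rw [g_pow hp hu0 (by linarith)]; ring
  simp only [smul_eq_mul, Function.comp_apply]
  rw [hgp, ← Real.rpow_natCast (1 - 2 * u ^ p) 2, ← Real.rpow_mul h2y.le]
  norm_num
  rw [Real.rpow_neg_one]
  field_simp






lemma s0_facts {p : ℝ} (hp : 1 < p) :
    0 < (2:ℝ) ^ (-(1/p)) ∧ (2:ℝ) ^ (-(1/p)) < 1 ∧ ((2:ℝ) ^ (-(1/p))) ^ p = 1/2 ∧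
      gfun p ((2:ℝ) ^ (-(1/p))) = 1 := by
  have hp0 : (0:ℝ) < p := lt_trans one_pos hp
  have h1 : (0:ℝ) < (2:ℝ) ^ (-(1/p)) := Real.rpow_pos_of_pos two_pos _
  have h2 : (2:ℝ) ^ (-(1/p)) < 1 :=
    Real.rpow_lt_one_of_one_lt_of_neg one_lt_two (neg_neg_of_pos (by positivity))
  have h3 : ((2:ℝ) ^ (-(1/p))) ^ p = 1/2 := by
    rw [← Real.rpow_mul (by norm_num : (0:ℝ) ≤ 2)]
    rw [show -(1/p) * p = -1 by field_simp]
    rw [Real.rpow_neg_one]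
    norm_num
  have h4 : gfun p ((2:ℝ) ^ (-(1/p))) = 1 := by
    unfold gfun
    rw [h3]
    rw [show (1:ℝ) - 1/2 = 2⁻¹ by norm_num, ← Real.rpow_neg_one (2:ℝ),
        ← Real.rpow_mul (by norm_num : (0:ℝ) ≤ 2),
        ← Real.rpow_add two_pos, ← Real.rpow_add two_pos]
    rw [show (2:ℝ)/p + (-(1/p) + -1 * (1/p)) = 0 by field_simp; ring]
    exact Real.rpow_zero 2
  exact ⟨h1, h2, h3, h4⟩

lemma g_mem_Icc {p : ℝ} (hp : 1 < p) {u : ℝ} (hu0 : 0 ≤ u) (hu2 : u ^ p ≤ 1/2) :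
    gfun p u ∈ Set.Icc (0:ℝ) 1 := by
  have hp0 : (0:ℝ) < p := lt_trans one_pos hp
  have hb : (0:ℝ) ≤ 1 - u ^ p := by linarith
  have hg0 : 0 ≤ gfun p u := by
    unfold gfun
    have := Real.rpow_nonneg hb (1/p)
    positivity
  refine ⟨hg0, ?_⟩
  have hgp : gfun p u ^ p ≤ 1 := by
    rw [g_pow hp hu0 (by linarith)]
    nlinarith [Real.rpow_nonneg hu0 p]
  by_contra h
  push_neg at h
  have : 1 < gfun p u ^ p :=
    (Real.one_lt_rpow_iff_of_pos (lt_trans one_pos h)).2 (Or.inl ⟨h, hp0⟩)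
  linarith

lemma key_end {p : ℝ} (hp : 1 < p) :
    (∫ t in (0:ℝ)..(1:ℝ), (1 - t ^ p) ^ ((-(1/2)) : ℝ))
      = 2 ^ ((2:ℝ)/p) * ∫ t in (0:ℝ)..((2:ℝ) ^ (-(1/p))), (1 - t ^ p) ^ (1/p - 1) := by
  have hp0 : (0:ℝ) < p := lt_trans one_pos hp
  obtain ⟨h1, h2, h3, h4⟩ := s0_facts hp
  set s₀ : ℝ := (2:ℝ) ^ (-(1/p)) with hs₀
  set Φ : ℝ → ℝ := fun s => ∫ t in (0:ℝ)..(gfun p s), (1 - t ^ p) ^ ((-(1/2)) : ℝ) with hΦ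
  set Ψ : ℝ → ℝ := fun s => 2 ^ ((2:ℝ)/p) * ∫ t in (0:ℝ)..s, (1 - t ^ p) ^ (1/p - 1) with hΨ
  have hint2 : IntegrableOn (fun t : ℝ => (1 - t ^ p) ^ ((-(1/2)) : ℝ))
      (Set.uIcc (0:ℝ) 1) volume := by
    rw [Set.uIcc_of_le (zero_le_one : (0:ℝ) ≤ 1)]
    exact (intervalIntegrable_iff_integrableOn_Icc_of_le zero_le_one).1
      (integrable01 hp (by norm_num) (by norm_num))
  have hint1 : IntegrableOn (fun t : ℝ => (1 - t ^ p) ^ (1/p - 1 : ℝ))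
      (Set.uIcc (0:ℝ) 1) volume := by
    rw [Set.uIcc_of_le (zero_le_one : (0:ℝ) ≤ 1)]
    refine (intervalIntegrable_iff_integrableOn_Icc_of_le zero_le_one).1
      (integrable01 hp ?_ ?_)
    · have : 0 < 1/p := by positivity
      linarith
    · have : 1/p < 1 := by
        rw [div_lt_one hp0]; exact hp
      linarith
  have hgcont : ContinuousOn (gfun p) (Set.Icc 0 s₀) := by
    unfold gfun
    exact continuousOn_const.mul (continuousOn_id.mul
      ((continuousOn_const.sub (continuousOn_id.rpow_const fun x _ => Or.inr hp0.le)).rpow_const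
        fun x _ => Or.inr (by positivity)))
  have hmaps : Set.MapsTo (gfun p) (Set.Icc 0 s₀) (Set.uIcc (0:ℝ) 1) := by
    intro u hu
    rw [Set.uIcc_of_le (zero_le_one : (0:ℝ) ≤ 1)]
    refine g_mem_Icc hp hu.1 ?_
    calc u ^ p ≤ s₀ ^ p := Real.rpow_le_rpow hu.1 hu.2 hp0.le
      _ = 1/2 := h3
  have hΦcont : ContinuousOn Φ (Set.Icc 0 s₀) :=
    (intervalIntegral.continuousOn_primitive_interval hint2).comp hgcont hmaps
  have hΨcont : ContinuousOn Ψ (Set.Icc 0 s₀) := by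
    refine continuousOn_const.mul
      (((intervalIntegral.continuousOn_primitive_interval hint1).mono ?_))
    rw [Set.uIcc_of_le (zero_le_one : (0:ℝ) ≤ 1)]
    exact Set.Icc_subset_Icc le_rfl h2.le
  have heq : ∀ s ∈ Set.Ico (0:ℝ) s₀, Φ s = Ψ s := by
    intro s hsm
    have : s ^ p < 1/2 := by
      rw [← h3]
      exact Real.rpow_lt_rpow hsm.1 hsm.2 hp0
    exact key hp hsm.1 this
  have hne : (nhdsWithin s₀ (Set.Ico 0 s₀)).NeBot := by
    rw [← mem_closure_iff_nhdsWithin_neBot, closure_Ico (ne_of_lt h1)]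
    exact ⟨h1.le, le_rfl⟩
  have t1 : Filter.Tendsto Φ (nhdsWithin s₀ (Set.Ico 0 s₀)) (nhds (Φ s₀)) :=
    ((hΦcont s₀ ⟨h1.le, le_rfl⟩).mono_left (nhdsWithin_mono _ Set.Ico_subset_Icc_self))
  have t2 : Filter.Tendsto Ψ (nhdsWithin s₀ (Set.Ico 0 s₀)) (nhds (Ψ s₀)) :=
    ((hΨcont s₀ ⟨h1.le, le_rfl⟩).mono_left (nhdsWithin_mono _ Set.Ico_subset_Icc_self))
  have t1' : Filter.Tendsto Φ (nhdsWithin s₀ (Set.Ico 0 s₀)) (nhds (Ψ s₀)) := by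
    refine t2.congr' ?_
    exact Filter.eventuallyEq_of_mem self_mem_nhdsWithin (fun s hsm => (heq s hsm).symm)
  have hfinal : Φ s₀ = Ψ s₀ := tendsto_nhds_unique t1 t1'
  have : Φ s₀ = ∫ t in (0:ℝ)..(1:ℝ), (1 - t ^ p) ^ ((-(1/2)) : ℝ) := by
    rw [hΦ]; simp only []; rw [h4]
  rw [← this, hfinal]



end MAC

/-- Lemma 1 (cosine part): cos_{2,p}(2^{2/p} x) = 1 - 2 sin_{p*,p}^p x. -/
theorem multiple_angle_cosine_part
    (p pst : ℝ) (hp : 1 < p) (hpst : pst = p / (p - 1))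
    (F₁ F₂ : ℝ → ℝ)
    (hF₁ : ∀ s, F₁ s = ∫ t in (0:ℝ)..s, (1 - t ^ p) ^ (-(1/pst)))
    (hF₂ : ∀ s, F₂ s = ∫ t in (0:ℝ)..s, (1 - t ^ p) ^ (-(1/2) : ℝ))
    (pipstp : ℝ) (hpi : pipstp = 2 * F₁ 1)
    (x : ℝ) (hx : x ∈ Set.Icc 0 (pipstp / 2))
    (s σ : ℝ) (hs : s ∈ Set.Icc (0:ℝ) 1) (hσ : σ ∈ Set.Icc (0:ℝ) 1)
    (hFs : F₁ s = x) (hFσ : F₂ σ = 2 ^ ((2:ℝ)/p) * x) :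
    (1 - σ ^ p) ^ ((1:ℝ)/2) = 1 - 2 * s ^ p := by
  have hp0 : (0:ℝ) < p := lt_trans one_pos hp
  have hexp : -(1/pst) = 1/p - 1 := by
    rw [hpst]
    field_simp
    ring
  have hF₁' : ∀ y, F₁ y = ∫ t in (0:ℝ)..y, (1 - t ^ p) ^ (1/p - 1 : ℝ) := by
    intro y; rw [hF₁ y, hexp]
  clear hF₁ hexp hpst hpi hx
  obtain ⟨h1, h2, h3, h4⟩ := MAC.s0_facts hp
  set s₀ : ℝ := (2:ℝ) ^ (-(1/p)) with hs₀
  have he1a : (-1:ℝ) < 1/p - 1 := by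
    have : 0 < 1/p := by positivity
    linarith
  have he1b : (1/p - 1 : ℝ) < 0 := by
    have : 1/p < 1 := by rw [div_lt_one hp0]; exact hp
    linarith
  have he2a : (-1:ℝ) < -(1/2) := by norm_num
  have he2b : (-(1/2) : ℝ) < 0 := by norm_num
  rcases le_or_gt s s₀ with hcase | hcase
  · -- s ≤ s₀
    have hsp2 : s ^ p ≤ 1/2 := by
      rw [← h3]
      exact Real.rpow_le_rpow hs.1 hcase hp0.le
    have hkey : F₂ (MAC.gfun p s) = 2 ^ ((2:ℝ)/p) * F₁ s := by
      rcases eq_or_lt_of_le hcase with heq | hlt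
      · rw [hF₂, hF₁', heq, h4]
        exact MAC.key_end hp
      · rw [hF₂, hF₁']
        exact MAC.key hp hs.1 (by rw [← h3]; exact Real.rpow_lt_rpow hs.1 hlt hp0)
    have hG : MAC.gfun p s ∈ Set.Icc (0:ℝ) 1 := MAC.g_mem_Icc hp hs.1 hsp2
    have hFeq : F₂ σ = F₂ (MAC.gfun p s) := by
      rw [hkey, hFσ, hFs]
    have hσG : σ = MAC.gfun p s := by
      by_contra hne
      rcases lt_or_gt_of_ne hne with hlt | hgt
      · have hpos := MAC.integral_pos_aux hp he2a he2b hσ.1 hlt hG.2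
        have hsub := intervalIntegral.integral_interval_sub_left
          (MAC.integrable_aux hp he2a he2b le_rfl zero_le_one hG.1 hG.2)
          (MAC.integrable_aux hp he2a he2b le_rfl zero_le_one hσ.1 hσ.2)
          (f := fun t : ℝ => (1 - t ^ p) ^ ((-(1/2)) : ℝ)) (μ := MeasureTheory.volume)
        rw [hF₂, hF₂] at hFeq
        rw [hFeq] at hsub
        simp only [sub_self] at hsub
        rw [← hsub] at hpos
        exact lt_irrefl 0 hpos
      · have hpos := MAC.integral_pos_aux hp he2a he2b hG.1 hgt hσ.2
        have hsub := intervalIntegral.integral_interval_sub_left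
          (MAC.integrable_aux hp he2a he2b le_rfl zero_le_one hσ.1 hσ.2)
          (MAC.integrable_aux hp he2a he2b le_rfl zero_le_one hG.1 hG.2)
          (f := fun t : ℝ => (1 - t ^ p) ^ ((-(1/2)) : ℝ)) (μ := MeasureTheory.volume)
        rw [hF₂, hF₂] at hFeq
        rw [hFeq] at hsub
        simp only [sub_self] at hsub
        rw [← hsub] at hpos
        exact lt_irrefl 0 hpos
    have hσp : 1 - σ ^ p = (1 - 2 * s ^ p) ^ (2:ℕ) := by
      rw [hσG, MAC.g_pow hp hs.1 (by linarith)]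
      ring
    rw [hσp, ← Real.rpow_natCast (1 - 2 * s ^ p) 2,
        ← Real.rpow_mul (by linarith : (0:ℝ) ≤ 1 - 2 * s ^ p)]
    norm_num
  · -- s₀ < s : contradiction
    exfalso
    have hσle : F₂ σ ≤ F₂ 1 := by
      have hsub := intervalIntegral.integral_interval_sub_left
        (MAC.integrable_aux hp he2a he2b le_rfl zero_le_one zero_le_one le_rfl)
        (MAC.integrable_aux hp he2a he2b le_rfl zero_le_one hσ.1 hσ.2)
        (f := fun t : ℝ => (1 - t ^ p) ^ ((-(1/2)) : ℝ)) (μ := MeasureTheory.volume)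
      have hnn : 0 ≤ ∫ t in σ..(1:ℝ), (1 - t ^ p) ^ ((-(1/2)) : ℝ) := by
        apply intervalIntegral.integral_nonneg hσ.2
        intro t ht
        exact Real.rpow_nonneg
          (by
            have : t ^ p ≤ 1 := Real.rpow_le_one (le_trans hσ.1 ht.1) ht.2 hp0.le
            linarith) _
      rw [hF₂, hF₂]
      have := hsub ▸ hnn
      linarith [this]
    have hF21 : F₂ 1 = 2 ^ ((2:ℝ)/p) * F₁ s₀ := by
      rw [hF₂, hF₁']
      exact MAC.key_end hp
    have hmono : F₁ s₀ < F₁ s := by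
      have hpos := MAC.integral_pos_aux hp he1a he1b h1.le hcase hs.2
      have hsub := intervalIntegral.integral_interval_sub_left
        (MAC.integrable_aux hp he1a he1b le_rfl zero_le_one hs.1 hs.2)
        (MAC.integrable_aux hp he1a he1b le_rfl zero_le_one h1.le h2.le)
        (f := fun t : ℝ => (1 - t ^ p) ^ (1/p - 1 : ℝ)) (μ := MeasureTheory.volume)
      rw [hF₁', hF₁']
      rw [← hsub] at hpos
      linarith
    have h2p : (0:ℝ) < 2 ^ ((2:ℝ)/p) := Real.rpow_pos_of_pos two_pos _
    have : F₂ 1 < F₂ σ := by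
      rw [hF21, hFσ, ← hFs]
      exact (mul_lt_mul_iff_right₀ h2p).2 hmono
    linarith
end

section
/- Let p, q > 1, p* = p/(p−1), q* = q/(q−1). Then q·∫₀¹ (1 − t^q)^{−1/p} dt = p*·∫₀¹ (1 − t^{p*})^{−1/q*} dt; equivalently, q·π_{p,q} = p*·π_{q*,p*}. -/
open MeasureTheory intervalIntegral Set

lemma rpow_image_Ioo (r : ℝ) (hr : 0 < r) :
    (fun t : ℝ => t ^ r) '' Ioo 0 1 = Ioo (0:ℝ) 1 := by
  ext s
  constructor
  · rintro ⟨t, ⟨ht0, ht1⟩, rfl⟩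
    exact ⟨Real.rpow_pos_of_pos ht0 r, Real.rpow_lt_one ht0.le ht1 hr⟩
  · rintro ⟨hs0, hs1⟩
    refine ⟨s ^ (1/r), ⟨Real.rpow_pos_of_pos hs0 _,
      Real.rpow_lt_one hs0.le hs1 (by positivity)⟩, ?_⟩
    show (s ^ (1/r)) ^ r = s
    rw [← Real.rpow_mul hs0.le, one_div, inv_mul_cancel₀ hr.ne', Real.rpow_one]

lemma beta_sub (r e : ℝ) (hr : 0 < r) :
    ∫ s in Ioo (0:ℝ) 1, s ^ (1/r - 1) * (1 - s) ^ e
      = r * ∫ t in Ioo (0:ℝ) 1, (1 - t ^ r) ^ e := by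
  have hmeas : MeasurableSet (Ioo (0:ℝ) 1) := measurableSet_Ioo
  have hderiv : ∀ x ∈ Ioo (0:ℝ) 1, HasDerivWithinAt (fun t : ℝ => t ^ r)
      (r * x ^ (r - 1)) (Ioo 0 1) x := fun x hx =>
    (Real.hasDerivAt_rpow_const (Or.inl hx.1.ne')).hasDerivWithinAt
  have hmono : StrictMonoOn (fun t : ℝ => t ^ r) (Ioo 0 1) :=
    fun a ha _ _ hab => Real.rpow_lt_rpow ha.1.le hab hr
  have hinj : InjOn (fun t : ℝ => t ^ r) (Ioo 0 1) := hmono.injOn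
  calc ∫ s in Ioo (0:ℝ) 1, s ^ (1/r-1) * (1-s) ^ e
      = ∫ s in (fun t : ℝ => t ^ r) '' Ioo 0 1, s ^ (1/r-1) * (1-s) ^ e := by
        rw [rpow_image_Ioo r hr]
    _ = ∫ t in Ioo (0:ℝ) 1, |r * t ^ (r-1)| • ((t^r) ^ (1/r-1) * (1 - t^r) ^ e) :=
        integral_image_eq_integral_abs_deriv_smul hmeas hderiv hinj _
    _ = ∫ t in Ioo (0:ℝ) 1, r * (1 - t^r) ^ e := by
        apply setIntegral_congr_fun hmeas
        intro t ht
        have ht0 : (0:ℝ) < t := ht.1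
        have h1 : |r * t ^ (r-1)| = r * t ^ (r-1) :=
          abs_of_pos (by positivity)
        have h2 : (t^r) ^ (1/r-1) = t ^ (1 - r) := by
          rw [← Real.rpow_mul ht0.le]
          congr 1
          field_simp
        simp only [smul_eq_mul]
        rw [h1, h2]
        have h3 : t ^ (r-1) * t ^ (1-r) = 1 := by
          rw [← Real.rpow_add ht0]
          norm_num
        calc r * t ^ (r-1) * (t ^ (1-r) * (1 - t^r) ^ e)
            = r * (t ^ (r-1) * t ^ (1-r)) * (1 - t^r) ^ e := by ring
          _ = r * (1 - t^r) ^ e := by rw [h3, mul_one]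
    _ = r * ∫ t in Ioo (0:ℝ) 1, (1 - t^r) ^ e := integral_const_mul r _

lemma refl_Ioo (f : ℝ → ℝ) :
    ∫ s in Ioo (0:ℝ) 1, f s = ∫ s in Ioo (0:ℝ) 1, f (1 - s) := by
  rw [← integral_Ioc_eq_integral_Ioo, ← integral_Ioc_eq_integral_Ioo,
    ← intervalIntegral.integral_of_le (by norm_num : (0:ℝ) ≤ 1),
    ← intervalIntegral.integral_of_le (by norm_num : (0:ℝ) ≤ 1)]
  have := intervalIntegral.integral_comp_sub_left (a := 0) (b := 1) f 1
  simp only [sub_zero, sub_self] at this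
  rw [this]

/-- Lemma 2 (first identity): q · π_{p,q} = p* · π_{q*,p*}. -/
theorem generalized_pi_duality
    (p q pst qst : ℝ) (hp : 1 < p) (hq : 1 < q)
    (hpst : pst = p / (p - 1)) (hqst : qst = q / (q - 1)) :
    q * ∫ t in (0:ℝ)..1, (1 - t ^ q) ^ (-(1/p)) =
      pst * ∫ t in (0:ℝ)..1, (1 - t ^ pst) ^ (-(1/qst)) := by
  have hp0 : (0:ℝ) < p - 1 := by linarith
  have hq0 : (0:ℝ) < q - 1 := by linarith
  have hpst1 : 1 < pst := by
    rw [hpst, lt_div_iff₀ hp0]; linarith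
  have e1 : 1/pst - 1 = -(1/p) := by
    rw [hpst]; field_simp; ring
  have e2 : -(1/qst) = 1/q - 1 := by
    rw [hqst]; field_simp; ring
  rw [intervalIntegral.integral_of_le (by norm_num : (0:ℝ) ≤ 1),
    intervalIntegral.integral_of_le (by norm_num : (0:ℝ) ≤ 1),
    integral_Ioc_eq_integral_Ioo, integral_Ioc_eq_integral_Ioo,
    ← beta_sub q (-(1/p)) (by linarith), ← beta_sub pst (-(1/qst)) (by linarith)]
  rw [e1, e2, refl_Ioo]
  apply setIntegral_congr_fun measurableSet_Ioo
  intro s _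
  simp only
  ring_nf
end

section
/- Let p, q > 1, p* = p/(p−1), q* = q/(q−1). Let F₁(s) = ∫₀ˢ (1 − t^q)^{−1/p} dt and F₂(s) = ∫₀ˢ (1 − t^{p*})^{−1/q*} dt for s ∈ [0,1], with π_{p,q} = 2F₁(1) and π_{q*,p*} = 2F₂(1). For every x ∈ [0,1], if s, σ ∈ [0,1] satisfy F₁(s) = (π_{p,q}/2)·x and F₂(σ) = (π_{q*,p*}/2)·(1 − x), then s = (1 − σ^{p*})^{1/q}. -/
/-!
Write `c u = (1 - u ^ q) ^ (1 / p*)`. The function `u ↦ F_{q*,p*} (c u) + (q / p*) F_{p,q} u` has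
zero derivative on `(0, 1)`: the integrand of `F_{q*,p*}` at `c u` is `u ^ (1 - q)`, while
`c' u = -(q / p*) u ^ (q - 1) (1 - u ^ q) ^ (-1 / p)`. Being continuous on `[0, 1]`, it is constant
there; comparing `u = 0` with `u = 1` gives `π_{q*,p*} = (q / p*) π_{p,q}`, and then
`F_{q*,p*} (c s) = (π_{q*,p*} / 2) (1 - x) = F_{q*,p*} σ`. Strict monotonicity of `F_{q*,p*}`
gives `σ = c s`, which inverts to `s = (1 - σ ^ p*) ^ (1 / q)`.
-/

open MeasureTheory Set Real

/-- The paper's `F_{p,q}`, the inverse of `sin_{p,q}` on `[0, π_{p,q} / 2]`. -/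
noncomputable def genArcsin (p q s : ℝ) : ℝ := ∫ t in (0:ℝ)..s, (1 - t ^ q) ^ (-(1 / p))

section GenArcsin

variable {p q : ℝ}

lemma intervalIntegrable_genArcsin_integrand_zero_one (hp : 1 < p) (hq : 1 ≤ q) :
    IntervalIntegrable (fun t : ℝ => (1 - t ^ q) ^ (-(1 / p))) volume 0 1 := by
  have hexp : 0 < 1 / p := by positivity
  have hdom : IntervalIntegrable (fun t : ℝ => (1 - t) ^ (-(1 / p))) volume 0 1 := by
    have hexp1 : -1 < -(1 / p) := by
      rw [neg_lt_neg_iff, div_lt_one (by linarith)]; exact hp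
    simpa using ((intervalIntegral.intervalIntegrable_rpow' (a := 0) (b := 1) hexp1).comp_sub_left
      1).symm
  refine hdom.mono_fun (Measurable.aestronglyMeasurable (by fun_prop)) ?_
  filter_upwards [ae_restrict_mem measurableSet_uIoc] with t ht
  rw [uIoc_of_le zero_le_one] at ht
  obtain ⟨ht0, ht1⟩ := ht
  have htq : t ^ q ≤ t := by simpa using rpow_le_rpow_of_exponent_ge ht0 ht1 hq
  have htq1 : t ^ q ≤ 1 := htq.trans ht1
  rw [norm_of_nonneg (rpow_nonneg (by linarith) _), norm_of_nonneg (rpow_nonneg (by linarith) _)]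
  rcases ht1.eq_or_lt with rfl | ht1
  · simp -- both sides are the junk value `0 ^ (-(1 / p)) = 0`
  · exact rpow_le_rpow_of_nonpos (by linarith) (by linarith) (by linarith)

lemma intervalIntegrable_genArcsin_integrand {a b : ℝ} (hp : 1 < p) (hq : 1 ≤ q)
    (ha : a ∈ Icc 0 1) (hb : b ∈ Icc 0 1) :
    IntervalIntegrable (fun t : ℝ => (1 - t ^ q) ^ (-(1 / p))) volume a b := by
  rw [← uIcc_of_le zero_le_one] at ha hb
  exact (intervalIntegrable_genArcsin_integrand_zero_one hp hq).mono_set (uIcc_subset_uIcc ha hb)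

lemma continuousOn_genArcsin (hp : 1 < p) (hq : 1 ≤ q) :
    ContinuousOn (genArcsin p q) (Icc 0 1) := by
  have h := intervalIntegral.continuousOn_primitive_interval'
    (intervalIntegrable_genArcsin_integrand_zero_one hp hq) left_mem_uIcc
  rwa [uIcc_of_le zero_le_one] at h

lemma hasDerivAt_genArcsin (hp : 1 < p) (hq : 1 ≤ q) {u : ℝ} (hu : u ∈ Ioo 0 1) :
    HasDerivAt (genArcsin p q) ((1 - u ^ q) ^ (-(1 / p))) u := by
  have huq : u ^ q < 1 := rpow_lt_one hu.1.le hu.2 (by linarith)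
  refine intervalIntegral.integral_hasDerivAt_right (intervalIntegrable_genArcsin_integrand hp hq
      (left_mem_Icc.2 zero_le_one) (Ioo_subset_Icc_self hu))
    (Measurable.stronglyMeasurable (by fun_prop)).stronglyMeasurableAtFilter ?_
  have hbase : ContinuousAt (fun t : ℝ => 1 - t ^ q) u :=
    continuousAt_const.sub (continuousAt_rpow_const _ _ (Or.inl hu.1.ne'))
  exact hbase.rpow_const (Or.inl (by linarith))

lemma strictMonoOn_genArcsin (hp : 1 < p) (hq : 1 ≤ q) :
    StrictMonoOn (genArcsin p q) (Icc 0 1) := by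
  intro a ha b hb hab
  have hpos : 0 < ∫ t in a..b, (1 - t ^ q) ^ (-(1 / p)) := by
    refine intervalIntegral.intervalIntegral_pos_of_pos_on
      (intervalIntegrable_genArcsin_integrand hp hq ha hb) (fun t ht => ?_) hab
    have : t ^ q < 1 := rpow_lt_one (ha.1.trans ht.1.le) (ht.2.trans_le hb.2) (by linarith)
    exact rpow_pos_of_pos (by linarith) _
  rw [← intervalIntegral.integral_interval_sub_left
    (intervalIntegrable_genArcsin_integrand hp hq (left_mem_Icc.2 zero_le_one) hb)
    (intervalIntegrable_genArcsin_integrand hp hq (left_mem_Icc.2 zero_le_one) ha)] at hpos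
  unfold genArcsin
  linarith

lemma genArcsin_zero : genArcsin p q 0 = 0 := intervalIntegral.integral_same

end GenArcsin

lemma one_sub_rpow_rpow_mem_Icc {a b u : ℝ} (ha : 0 ≤ a) (hb : 0 ≤ b) (hu : u ∈ Icc 0 1) :
    (1 - u ^ a) ^ (1 / b) ∈ Icc 0 1 := by
  have hua : u ^ a ≤ 1 := rpow_le_one hu.1 hu.2 ha
  exact ⟨rpow_nonneg (by linarith) _,
    rpow_le_one (by linarith) (by linarith [rpow_nonneg hu.1 a]) (by positivity)⟩

lemma one_sub_rpow_rpow_mem_Ioo {a b u : ℝ} (ha : 0 < a) (hb : 0 < b) (hu : u ∈ Ioo 0 1) :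
    (1 - u ^ a) ^ (1 / b) ∈ Ioo 0 1 := by
  have hua : u ^ a < 1 := rpow_lt_one hu.1.le hu.2 ha
  exact ⟨rpow_pos_of_pos (by linarith) _,
    rpow_lt_one (by linarith) (by linarith [rpow_pos_of_pos hu.1 a]) (by positivity)⟩

lemma rpow_one_sub_rpow_rpow {a b u : ℝ} (ha : 0 < a) (hb : b ≠ 0) (hu : u ∈ Icc 0 1) :
    ((1 - u ^ a) ^ (1 / b)) ^ b = 1 - u ^ a := by
  have hua : u ^ a ≤ 1 := rpow_le_one hu.1 hu.2 ha.le
  rw [← rpow_mul (by linarith), one_div_mul_cancel hb, rpow_one]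

lemma one_sub_rpow_rpow_inverse {a b u : ℝ} (ha : 0 < a) (hb : b ≠ 0) (hu : u ∈ Icc 0 1) :
    (1 - ((1 - u ^ a) ^ (1 / b)) ^ b) ^ (1 / a) = u := by
  rw [rpow_one_sub_rpow_rpow ha hb hu, sub_sub_cancel, ← rpow_mul hu.1, mul_one_div_cancel ha.ne',
    rpow_one]

section Duality

variable {p p' q q' : ℝ} (hp : p.HolderConjugate p') (hq : q.HolderConjugate q')
include hp hq

lemma hasDerivAt_one_sub_rpow_rpow {u : ℝ} (hu : u ∈ Ioo 0 1) :
    HasDerivAt (fun v => (1 - v ^ q) ^ (1 / p'))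
      (-(q / p') * u ^ (q - 1) * (1 - u ^ q) ^ (-(1 / p))) u := by
  have huq : u ^ q < 1 := rpow_lt_one hu.1.le hu.2 hq.pos
  have hinner : HasDerivAt (fun v => 1 - v ^ q) (-(q * u ^ (q - 1))) u :=
    (hasDerivAt_rpow_const (Or.inl hu.1.ne')).const_sub 1
  refine ((hasDerivAt_rpow_const (p := 1 / p') (Or.inl (by linarith))).comp u
    hinner).congr_deriv ?_
  rw [one_div, one_div, hp.symm.inv_sub_one]
  ring

lemma genArcsin_conj_integrand_comp {u : ℝ} (hu : u ∈ Ioo 0 1) :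
    (1 - ((1 - u ^ q) ^ (1 / p')) ^ p') ^ (-(1 / q')) = u ^ (1 - q) := by
  rw [rpow_one_sub_rpow_rpow hq.pos hp.symm.ne_zero (Ioo_subset_Icc_self hu), sub_sub_cancel,
    ← rpow_mul hu.1.le, mul_neg, mul_one_div, hq.div_conj_eq_sub_one, neg_sub]

lemma hasDerivAt_genArcsin_conj_add {u : ℝ} (hu : u ∈ Ioo 0 1) :
    HasDerivAt (fun v => genArcsin q' p' ((1 - v ^ q) ^ (1 / p')) + q / p' * genArcsin p q v)
      0 u := by
  have hcu := one_sub_rpow_rpow_mem_Ioo hq.pos hp.symm.pos hu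
  have hF₂ := hasDerivAt_genArcsin hq.symm.lt hp.symm.lt.le hcu
  have hF₁ := hasDerivAt_genArcsin hp.lt hq.lt.le hu
  refine ((hF₂.comp u (hasDerivAt_one_sub_rpow_rpow hp hq hu)).add
    (hF₁.const_mul (q / p'))).congr_deriv ?_
  have hcancel : u ^ (1 - q) * u ^ (q - 1) = 1 := by
    rw [← rpow_add hu.1, sub_add_sub_cancel', sub_self, rpow_zero]
  rw [genArcsin_conj_integrand_comp hp hq hu]
  linear_combination (-(q / p') * (1 - u ^ q) ^ (-(1 / p))) * hcancel

lemma genArcsin_conj_add_eq {u : ℝ} (hu : u ∈ Icc 0 1) :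
    genArcsin q' p' ((1 - u ^ q) ^ (1 / p')) + q / p' * genArcsin p q u
      = q / p' * genArcsin p q 1 := by
  set G := fun v => genArcsin q' p' ((1 - v ^ q) ^ (1 / p')) + q / p' * genArcsin p q v
  have hG₁ : G 1 = q / p' * genArcsin p q 1 := by
    simp only [G, one_rpow, sub_self, zero_rpow (one_div_ne_zero hp.symm.ne_zero), genArcsin_zero,
      zero_add]
  have hGcont : ContinuousOn G (Icc 0 1) := by
    have hc : Continuous fun v : ℝ => (1 - v ^ q) ^ (1 / p') := by
      have := hq.pos; have := hp.symm.pos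
      fun_prop (disch := positivity)
    refine ((continuousOn_genArcsin hq.symm.lt hp.symm.lt.le).comp hc.continuousOn
      fun v hv => one_sub_rpow_rpow_mem_Icc hq.nonneg hp.symm.nonneg hv).add ?_
    exact (continuousOn_genArcsin hp.lt hq.lt.le).const_smul (q / p')
  suffices G u = G 1 by rwa [hG₁] at this
  rcases hu.2.eq_or_lt with rfl | hu1
  · rfl
  obtain ⟨c, -, hslope⟩ := exists_hasDerivAt_eq_slope G (fun _ => 0) hu1
    (hGcont.mono (Icc_subset_Icc hu.1 le_rfl))
    fun v hv => hasDerivAt_genArcsin_conj_add hp hq ⟨hu.1.trans_lt hv.1, hv.2⟩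
  rw [eq_comm, div_eq_zero_iff, sub_eq_zero] at hslope
  exact (hslope.resolve_right (sub_ne_zero.2 hu1.ne')).symm

lemma genArcsin_conj_one : genArcsin q' p' 1 = q / p' * genArcsin p q 1 := by
  simpa [zero_rpow hq.ne_zero, genArcsin_zero] using
    genArcsin_conj_add_eq hp hq (left_mem_Icc.2 zero_le_one)

end Duality

theorem generalized_sine_duality_general
    (p q pst qst : ℝ) (hp : 1 < p) (hq : 1 < q)
    (hpst : pst = p / (p - 1)) (hqst : qst = q / (q - 1))
    (F₁ F₂ : ℝ → ℝ)
    (hF₁ : ∀ s, F₁ s = ∫ t in (0:ℝ)..s, (1 - t ^ q) ^ (-(1/p)))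
    (hF₂ : ∀ s, F₂ s = ∫ t in (0:ℝ)..s, (1 - t ^ pst) ^ (-(1/qst)))
    (pipq piqstpst : ℝ) (hpi₁ : pipq = 2 * F₁ 1) (hpi₂ : piqstpst = 2 * F₂ 1)
    (x : ℝ)
    (s σ : ℝ) (hs : s ∈ Set.Icc (0:ℝ) 1) (hσ : σ ∈ Set.Icc (0:ℝ) 1)
    (hFs : F₁ s = pipq / 2 * x) (hFσ : F₂ σ = piqstpst / 2 * (1 - x)) :
    s = (1 - σ ^ pst) ^ (1/q) := by
  have hp' : p.HolderConjugate pst := (holderConjugate_iff_eq_conjExponent hp).2 hpst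
  have hq' : q.HolderConjugate qst := (holderConjugate_iff_eq_conjExponent hq).2 hqst
  obtain rfl : F₁ = genArcsin p q := funext hF₁
  obtain rfl : F₂ = genArcsin qst pst := funext hF₂
  subst hpi₁ hpi₂
  have hsum := genArcsin_conj_add_eq hp' hq' hs
  have hπ := genArcsin_conj_one hp' hq'
  have hσ_eq : σ = (1 - s ^ q) ^ (1 / pst) := by
    refine (strictMonoOn_genArcsin hq'.symm.lt hp'.symm.lt.le).injOn hσ
      (one_sub_rpow_rpow_mem_Icc hq'.nonneg hp'.symm.nonneg hs) ?_
    linear_combination hFσ - hsum + (1 - x) * hπ + q / pst * hFs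
  rw [hσ_eq, one_sub_rpow_rpow_inverse hq'.pos hp'.symm.ne_zero hs]

/-- Lemma 2 (second identity): sin_{p,q}((π_{p,q}/2)x) = cos_{q*,p*}^{q*-1}((π_{q*,p*}/2)(1-x)). -/
theorem generalized_sine_duality
    (p q pst qst : ℝ) (hp : 1 < p) (hq : 1 < q)
    (hpst : pst = p / (p - 1)) (hqst : qst = q / (q - 1))
    (F₁ F₂ : ℝ → ℝ)
    (hF₁ : ∀ s, F₁ s = ∫ t in (0:ℝ)..s, (1 - t ^ q) ^ (-(1/p)))
    (hF₂ : ∀ s, F₂ s = ∫ t in (0:ℝ)..s, (1 - t ^ pst) ^ (-(1/qst)))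
    (pipq piqstpst : ℝ) (hpi₁ : pipq = 2 * F₁ 1) (hpi₂ : piqstpst = 2 * F₂ 1)
    (x : ℝ) (hx : x ∈ Set.Icc (0:ℝ) 1)
    (s σ : ℝ) (hs : s ∈ Set.Icc (0:ℝ) 1) (hσ : σ ∈ Set.Icc (0:ℝ) 1)
    (hFs : F₁ s = pipq / 2 * x) (hFσ : F₂ σ = piqstpst / 2 * (1 - x)) :
    s = (1 - σ ^ pst) ^ (1/q) :=
  generalized_sine_duality_general p q pst qst hp hq hpst hqst F₁ F₂ hF₁ hF₂ pipq piqstpst hpi₁ hpi₂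
    x s σ hs hσ hFs hFσ
end

section
/- Let p > 1 and p* = p/(p−1). Let F₁(s) = ∫₀ˢ (1 − t^p)^{−1/p*} dt and F₂(s) = ∫₀ˢ (1 − t^p)^{−1/2} dt for s ∈ [0,1], with π_{p*,p} = 2F₁(1). For every x ∈ [0, π_{p*,p}/2], if s, σ ∈ [0,1] satisfy F₁(s) = x and F₂(σ) = 2^{2/p}·x, and C = (1 − σ^p)^{1/2}, then s = ((1 − C)/2)^{1/p}. -/
open Real MeasureTheory intervalIntegral Set

namespace HA

noncomputable def g (p c : ℝ) : ℝ → ℝ := fun t => (1 - t ^ p) ^ (-c)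

lemma g_meas (p c : ℝ) : Measurable (g p c) := by
  unfold g
  fun_prop

lemma g_intble {p c : ℝ} (hp : 1 < p) (hc0 : 0 < c) (hc1 : c < 1) {b : ℝ}
    (hb : b ∈ Icc (0:ℝ) 1) : IntervalIntegrable (g p c) volume 0 b := by
  have hmaj : IntervalIntegrable (fun t : ℝ => (1 - t) ^ (-c)) volume 0 b := by
    have h1 : IntervalIntegrable (fun x : ℝ => x ^ (-c)) volume (1 - b) 1 :=
      intervalIntegrable_rpow' (by linarith)
    simpa using (h1.comp_sub_left 1).symm
  refine hmaj.mono_fun ((g_meas p c).aestronglyMeasurable) ?_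
  rw [Filter.EventuallyLE, ae_restrict_iff' measurableSet_uIoc]
  filter_upwards with t ht
  rw [uIoc_of_le hb.1] at ht
  have ht0 : 0 < t := ht.1
  have ht1 : t ≤ 1 := ht.2.trans hb.2
  have htp : t ^ p ≤ t := by
    calc t ^ p ≤ t ^ (1:ℝ) := Real.rpow_le_rpow_of_exponent_ge ht0 ht1 hp.le
    _ = t := Real.rpow_one t
  have h0 : (0:ℝ) ≤ 1 - t ^ p := by
    have : (0:ℝ) ≤ 1 - t := by linarith
    linarith
  show |g p c t| ≤ _
  unfold g
  rw [Real.norm_eq_abs, abs_of_nonneg (Real.rpow_nonneg h0 _),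
    abs_of_nonneg (Real.rpow_nonneg (by linarith : (0:ℝ) ≤ 1 - t) _)]
  rcases eq_or_lt_of_le (show t ≤ 1 from ht1) with h | h
  · subst h
    rw [Real.one_rpow]
  · exact Real.rpow_le_rpow_of_nonpos (by linarith) (by linarith) (by linarith)

lemma F_sub {p c : ℝ} (hp : 1 < p) (hc0 : 0 < c) (hc1 : c < 1) {a b : ℝ}
    (ha : a ∈ Icc (0:ℝ) 1) (hb : b ∈ Icc (0:ℝ) 1) :
    (∫ t in (0:ℝ)..b, g p c t) - (∫ t in (0:ℝ)..a, g p c t) = ∫ t in a..b, g p c t := by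
  have hia := g_intble hp hc0 hc1 ha
  have hib := g_intble hp hc0 hc1 hb
  have h := integral_add_adjacent_intervals hia.symm hib
  rw [integral_symm] at h
  linarith [h]

lemma F_strictMonoOn {p c : ℝ} (hp : 1 < p) (hc0 : 0 < c) (hc1 : c < 1) :
    StrictMonoOn (fun s => ∫ t in (0:ℝ)..s, g p c t) (Icc 0 1) := by
  intro a ha b hb hab
  have key : 0 < ∫ t in a..b, g p c t := by
    refine intervalIntegral_pos_of_pos_on ((g_intble hp hc0 hc1 ha).symm.trans
      (g_intble hp hc0 hc1 hb)) ?_ hab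
    intro t ht
    have ht0 : 0 ≤ t := le_trans ha.1 ht.1.le
    have ht1 : t < 1 := lt_of_lt_of_le ht.2 hb.2
    have : t ^ p < 1 := Real.rpow_lt_one ht0 ht1 (by linarith)
    exact Real.rpow_pos_of_pos (by linarith) _
  have := F_sub hp hc0 hc1 ha hb
  simp only at this ⊢
  linarith


lemma F_contOn {p c : ℝ} (hp : 1 < p) (hc0 : 0 < c) (hc1 : c < 1) :
    ContinuousOn (fun s => ∫ t in (0:ℝ)..s, g p c t) (Icc 0 1) := by
  have h := g_intble hp hc0 hc1 (right_mem_Icc.2 zero_le_one)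
  rw [intervalIntegrable_iff_integrableOn_Icc_of_le zero_le_one] at h
  have h2 := continuousOn_primitive_interval (a := (0:ℝ)) (b := 1) (f := g p c) (μ := volume)
    (by rwa [uIcc_of_le zero_le_one])
  rwa [uIcc_of_le (zero_le_one : (0:ℝ) ≤ 1)] at h2

lemma F_hasDerivAt {p c : ℝ} (hp : 1 < p) (hc0 : 0 < c) (hc1 : c < 1) {y : ℝ}
    (hy0 : 0 ≤ y) (hy1 : y < 1) :
    HasDerivAt (fun s => ∫ t in (0:ℝ)..s, g p c t) ((1 - y ^ p) ^ (-c)) y := by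
  have hyi : IntervalIntegrable (g p c) volume 0 y := g_intble hp hc0 hc1 ⟨hy0, hy1.le⟩
  have hcont : ContinuousAt (g p c) y := by
    have hbase : ContinuousAt (fun t : ℝ => 1 - t ^ p) y :=
      continuousAt_const.sub (Real.continuousAt_rpow_const y p (Or.inr (by linarith)))
    have hne : (1:ℝ) - y ^ p ≠ 0 := by
      have : y ^ p < 1 := Real.rpow_lt_one hy0 hy1 (by linarith)
      linarith
    exact hbase.rpow_const (Or.inl hne)
  exact integral_hasDerivAt_right hyi
    ((g_meas p c).aestronglyMeasurable.stronglyMeasurableAtFilter) hcont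


noncomputable def sig (p : ℝ) : ℝ → ℝ := fun s => (4:ℝ) ^ (1/p) * (s * (1 - s ^ p) ^ (1/p))

lemma sig_pow {p : ℝ} (hp : 1 < p) {s : ℝ} (hs0 : 0 ≤ s) (hsp : s ^ p ≤ 1) :
    sig p s ^ p = 4 * s ^ p * (1 - s ^ p) := by
  have hp0 : (0:ℝ) < p := by linarith
  have h1 : (0:ℝ) ≤ (4:ℝ) ^ (1/p) := Real.rpow_nonneg (by norm_num) _
  have h2 : (0:ℝ) ≤ (1 - s ^ p) ^ (1/p) := Real.rpow_nonneg (by linarith) _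
  have e4 : (((4:ℝ) ^ (1/p)) ^ p : ℝ) = 4 := by
    rw [← Real.rpow_mul (by norm_num : (0:ℝ) ≤ 4), one_div, inv_mul_cancel₀ hp0.ne',
      Real.rpow_one]
  have e2 : (((1 - s ^ p) ^ (1/p)) ^ p : ℝ) = 1 - s ^ p := by
    rw [← Real.rpow_mul (by linarith), one_div, inv_mul_cancel₀ hp0.ne', Real.rpow_one]
  unfold sig
  rw [Real.mul_rpow h1 (mul_nonneg hs0 h2), Real.mul_rpow hs0 h2, e4, e2]
  ring

lemma sig_nonneg {p : ℝ} {s : ℝ} (hs0 : 0 ≤ s) (hsp : s ^ p ≤ 1) : 0 ≤ sig p s :=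
  mul_nonneg (Real.rpow_nonneg (by norm_num) _)
    (mul_nonneg hs0 (Real.rpow_nonneg (by linarith) _))

lemma sig_le_one {p : ℝ} (hp : 1 < p) {s : ℝ} (hs0 : 0 ≤ s) (hsp : s ^ p ≤ 1) :
    sig p s ≤ 1 := by
  by_contra h
  push_neg at h
  have h1 : (1:ℝ) < sig p s ^ p := Real.one_lt_rpow h (by linarith)
  have hu : 0 ≤ s ^ p := Real.rpow_nonneg hs0 _
  rw [sig_pow hp hs0 hsp] at h1
  nlinarith [sq_nonneg (1 - 2 * s ^ p)]

lemma sig_lt_one {p : ℝ} (hp : 1 < p) {s : ℝ} (hs0 : 0 ≤ s) (hsp : s ^ p < 1/2) :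
    sig p s < 1 := by
  by_contra h
  push_neg at h
  have h1 : (1:ℝ) ≤ sig p s ^ p := by
    calc (1:ℝ) = 1 ^ p := (Real.one_rpow p).symm
    _ ≤ sig p s ^ p := Real.rpow_le_rpow zero_le_one h (by linarith)
  have hu : 0 ≤ s ^ p := Real.rpow_nonneg hs0 _
  rw [sig_pow hp hs0 (by linarith)] at h1
  nlinarith

lemma sig_hasDerivAt {p : ℝ} (hp : 1 < p) {s : ℝ} (hs0 : 0 ≤ s) (hsp : s ^ p < 1) :
    HasDerivAt (sig p)
      ((4:ℝ) ^ (1/p) * ((1 - s ^ p) ^ (1/p - 1) * (1 - 2 * s ^ p))) s := by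
  have hp0 : (0:ℝ) < p := by linarith
  have hb : (0:ℝ) < 1 - s ^ p := by linarith
  have h1 : HasDerivAt (fun t : ℝ => t ^ p) (p * s ^ (p - 1)) s :=
    Real.hasDerivAt_rpow_const (Or.inr hp.le)
  have h2 : HasDerivAt (fun t : ℝ => 1 - t ^ p) (-(p * s ^ (p - 1))) s := by
    have h := (hasDerivAt_const s (1:ℝ)).sub h1
    rw [zero_sub] at h
    exact h
  have h3 : HasDerivAt (fun t : ℝ => (1 - t ^ p) ^ (1/p))
      (-(p * s ^ (p - 1)) * (1/p) * (1 - s ^ p) ^ (1/p - 1)) s :=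
    h2.rpow_const (Or.inl hb.ne')
  have h4 : HasDerivAt (fun t : ℝ => t * (1 - t ^ p) ^ (1/p))
      (1 * (1 - s ^ p) ^ (1/p) +
        s * (-(p * s ^ (p - 1)) * (1/p) * (1 - s ^ p) ^ (1/p - 1))) s :=
    (hasDerivAt_id s).mul h3
  have h5 := h4.const_mul ((4:ℝ) ^ (1/p))
  refine h5.congr_deriv ?_
  have hss : s * s ^ (p - 1) = s ^ p := by
    rcases eq_or_lt_of_le hs0 with h | h
    · rw [← h, Real.zero_rpow hp0.ne', zero_mul]
    · have h2 := Real.rpow_add h 1 (p - 1)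
      rw [Real.rpow_one] at h2
      rw [← h2]
      congr 1
      ring
  have hsplit : (1 - s ^ p) ^ (1/p) = (1 - s ^ p) ^ (1/p - 1) * (1 - s ^ p) := by
    have h6 := Real.rpow_add_one hb.ne' (1/p - 1)
    rw [sub_add_cancel] at h6
    exact h6
  rw [hsplit]
  have key : s * (-(p * s ^ (p - 1)) * (1/p) * (1 - s ^ p) ^ (1/p - 1))
      = -((p * (1/p)) * ((s * s ^ (p - 1)) * (1 - s ^ p) ^ (1/p - 1))) := by ring
  rw [key, hss, mul_one_div_cancel hp0.ne', one_mul]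
  ring


lemma sig_cont {p : ℝ} (hp : 1 < p) : Continuous (sig p) := by
  have hpow : Continuous fun t : ℝ => t ^ p :=
    continuous_iff_continuousAt.2 fun x =>
      Real.continuousAt_rpow_const x p (Or.inr (by linarith))
  have h2 : Continuous fun t : ℝ => (1 - t ^ p) ^ (1/p) :=
    continuous_iff_continuousAt.2 fun x =>
      ((continuous_const.sub hpow).continuousAt).rpow_const (Or.inr (by positivity))
  exact continuous_const.mul (continuous_id.mul h2)

lemma m_pow {p : ℝ} (hp : 1 < p) : ((2:ℝ) ^ (-(1/p))) ^ p = 1/2 := by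
  have hp0 : (0:ℝ) < p := by linarith
  rw [← Real.rpow_mul (by norm_num : (0:ℝ) ≤ 2)]
  rw [show (-(1/p)) * p = -1 by field_simp]
  norm_num

lemma m_lt_one {p : ℝ} (hp : 1 < p) : (2:ℝ) ^ (-(1/p)) < 1 :=
  Real.rpow_lt_one_of_one_lt_of_neg (by norm_num) (by
    have : (0:ℝ) < 1/p := by positivity
    linarith)

lemma key_identity {p : ℝ} (hp : 1 < p) :
    ∀ y ∈ Icc (0:ℝ) ((2:ℝ) ^ (-(1/p))),
      (∫ t in (0:ℝ)..(sig p y), g p (1/2) t)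
        = 2 ^ ((2:ℝ)/p) * ∫ t in (0:ℝ)..y, g p (1 - 1/p) t := by
  have hp0 : (0:ℝ) < p := by linarith
  set m : ℝ := (2:ℝ) ^ (-(1/p)) with hm
  have hm0 : 0 < m := Real.rpow_pos_of_pos (by norm_num) _
  have hm1 : m < 1 := m_lt_one hp
  have hmp : m ^ p = 1/2 := m_pow hp
  have hc2a : (0:ℝ) < 1/2 := by norm_num
  have hc2b : (1/2:ℝ) < 1 := by norm_num
  have hc1a : (0:ℝ) < 1 - 1/p := by
    have : 1/p < 1 := by rw [div_lt_one hp0]; linarith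
    linarith
  have hc1b : (1:ℝ) - 1/p < 1 := by
    have : (0:ℝ) < 1/p := by positivity
    linarith
  -- facts for y in Ico 0 m
  have hyp_half : ∀ y, 0 ≤ y → y < m → y ^ p < 1/2 := by
    intro y hy0 hym
    calc y ^ p < m ^ p := Real.rpow_lt_rpow hy0 hym hp0
    _ = 1/2 := hmp
  have h4eq : ((4:ℝ) ^ (1/p)) = 2 ^ ((2:ℝ)/p) := by
    rw [show (4:ℝ) = (2:ℝ) ^ (2:ℝ) by rw [Real.rpow_two]; norm_num,
      ← Real.rpow_mul (by norm_num : (0:ℝ) ≤ 2)]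
    congr 1
    ring
  refine eq_of_has_deriv_right_eq
    (f' := fun y => 2 ^ ((2:ℝ)/p) * g p (1 - 1/p) y)
    (f := fun y => ∫ t in (0:ℝ)..(sig p y), g p (1/2) t)
    (g := fun y => 2 ^ ((2:ℝ)/p) * ∫ t in (0:ℝ)..y, g p (1 - 1/p) t)
    (a := 0) (b := m) ?_ ?_ ?_ ?_ ?_
  · intro y hy
    have hy0 : 0 ≤ y := hy.1
    have hyh : y ^ p < 1/2 := hyp_half y hy0 hy.2
    have hyp1 : y ^ p < 1 := by linarith
    have hσ0 : 0 ≤ sig p y := sig_nonneg hy0 hyp1.le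
    have hσ1 : sig p y < 1 := sig_lt_one hp hy0 hyh
    have hF2d : HasDerivAt (fun s => ∫ t in (0:ℝ)..s, g p (1/2) t)
        (g p (1/2) (sig p y)) (sig p y) := by
      have := F_hasDerivAt hp hc2a hc2b hσ0 hσ1
      exact this
    have hcomp := hF2d.comp y (sig_hasDerivAt hp hy0 hyp1)
    have hval : g p (1/2) (sig p y)
        * ((4:ℝ) ^ (1/p) * ((1 - y ^ p) ^ (1/p - 1) * (1 - 2 * y ^ p)))
        = 2 ^ ((2:ℝ)/p) * g p (1 - 1/p) y := by
      have hcpos : (0:ℝ) < 1 - 2 * y ^ p := by linarith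
      have h1 : 1 - sig p y ^ p = (1 - 2 * y ^ p) ^ 2 := by
        rw [sig_pow hp hy0 hyp1.le]; ring
      have h2 : g p (1/2) (sig p y) = (1 - 2 * y ^ p)⁻¹ := by
        unfold g
        rw [h1, ← Real.rpow_two, ← Real.rpow_mul hcpos.le]
        norm_num [Real.rpow_neg_one]
      have h3 : g p (1 - 1/p) y = (1 - y ^ p) ^ (1/p - 1) := by
        unfold g
        congr 1
        ring
      rw [h2, h3, h4eq]
      field_simp
    have hfin := hcomp.hasDerivWithinAt (s := Ici y)
    rw [hval] at hfin
    exact hfin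
  · intro y hy
    have hy1 : y < 1 := lt_of_lt_of_le hy.2 hm1.le
    exact ((F_hasDerivAt hp hc1a hc1b hy.1 hy1).const_mul
      ((2:ℝ) ^ ((2:ℝ)/p))).hasDerivWithinAt
  · have hmaps : MapsTo (sig p) (Icc 0 m) (Icc (0:ℝ) 1) := by
      intro y hy
      have hyp1 : y ^ p ≤ 1 := by
        have := Real.rpow_le_rpow hy.1 (hy.2.trans hm1.le) hp0.le
        rwa [Real.one_rpow] at this
      exact ⟨sig_nonneg hy.1 hyp1, sig_le_one hp hy.1 hyp1⟩
    exact (F_contOn hp hc2a hc2b).comp (sig_cont hp).continuousOn hmaps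
  · exact continuousOn_const.mul ((F_contOn hp hc1a hc1b).mono
      (Icc_subset_Icc le_rfl hm1.le))
  · have h0 : sig p 0 = 0 := by unfold sig; simp
    show (∫ t in (0:ℝ)..(sig p 0), g p (1/2) t)
      = 2 ^ ((2:ℝ)/p) * ∫ t in (0:ℝ)..(0:ℝ), g p (1 - 1/p) t
    rw [h0]
    simp


lemma eq_one_of_rpow {p a : ℝ} (hp : 0 < p) (ha : 0 ≤ a) (h : a ^ p = 1) : a = 1 := by
  rcases lt_trichotomy a 1 with hlt | heq | hgt
  · have := Real.rpow_lt_one ha hlt hp; linarith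
  · exact heq
  · have := Real.one_lt_rpow hgt hp; linarith

end HA

open HA

/-- Half-angle formula (2.3): sin_{p*,p} x = ((1 - cos_{2,p}(2^{2/p} x))/2)^{1/p}. -/
theorem half_angle_sine
    (p pst : ℝ) (hp : 1 < p) (hpst : pst = p / (p - 1))
    (F₁ F₂ : ℝ → ℝ)
    (hF₁ : ∀ s, F₁ s = ∫ t in (0:ℝ)..s, (1 - t ^ p) ^ (-(1/pst)))
    (hF₂ : ∀ s, F₂ s = ∫ t in (0:ℝ)..s, (1 - t ^ p) ^ (-(1/2) : ℝ))
    (pipstp : ℝ) (hpi : pipstp = 2 * F₁ 1)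
    (x : ℝ) (hx : x ∈ Set.Icc 0 (pipstp / 2))
    (s σ : ℝ) (hs : s ∈ Set.Icc (0:ℝ) 1) (hσ : σ ∈ Set.Icc (0:ℝ) 1)
    (hFs : F₁ s = x) (hFσ : F₂ σ = 2 ^ ((2:ℝ)/p) * x)
    (C : ℝ) (hC : C = (1 - σ ^ p) ^ ((1:ℝ)/2)) :
    s = ((1 - C) / 2) ^ (1/p) := by
  have hp0 : (0:ℝ) < p := by linarith
  have hpm1 : (0:ℝ) < p - 1 := by linarith
  have hc1a : (0:ℝ) < 1 - 1/p := by
    have : 1/p < 1 := by rw [div_lt_one hp0]; linarith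
    linarith
  have hc1b : (1:ℝ) - 1/p < 1 := by
    have : (0:ℝ) < 1/p := by positivity
    linarith
  have hF₁' : ∀ u, F₁ u = ∫ t in (0:ℝ)..u, HA.g p (1 - 1/p) t := by
    intro u
    rw [hF₁]
    have he : -(1/pst) = -(1 - 1/p) := by
      rw [hpst]
      field_simp
    rw [he]
    rfl
  have hF₂' : ∀ u, F₂ u = ∫ t in (0:ℝ)..u, HA.g p (1/2) t := by
    intro u
    rw [hF₂]
    rfl
  set m : ℝ := (2:ℝ) ^ (-(1/p)) with hm
  have hm0 : 0 < m := Real.rpow_pos_of_pos (by norm_num) _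
  have hm1 : m < 1 := HA.m_lt_one hp
  have hmp : m ^ p = 1/2 := HA.m_pow hp
  have F1mono := HA.F_strictMonoOn hp hc1a hc1b
  have F2mono := HA.F_strictMonoOn hp (by norm_num : (0:ℝ) < 1/2) (by norm_num : (1/2:ℝ) < 1)
  have key := HA.key_identity hp
  have hsigm : HA.sig p m = 1 := by
    apply HA.eq_one_of_rpow hp0 (HA.sig_nonneg hm0.le (by rw [hmp]; norm_num))
    rw [HA.sig_pow hp hm0.le (by rw [hmp]; norm_num), hmp]
    norm_num
  have hkm := key m ⟨hm0.le, le_rfl⟩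
  rw [hsigm] at hkm
  have h2pos : (0:ℝ) < 2 ^ ((2:ℝ)/p) := Real.rpow_pos_of_pos (by norm_num) _
  have hsm : s ≤ m := by
    by_contra h
    push_neg at h
    have h1 : F₁ m < F₁ s := by
      rw [hF₁' m, hF₁' s]
      exact F1mono ⟨hm0.le, hm1.le⟩ hs h
    have h2 : F₂ σ ≤ F₂ 1 := by
      rcases eq_or_lt_of_le hσ.2 with he | hl
      · rw [he]
      · rw [hF₂' σ, hF₂' 1]
        exact (F2mono hσ ⟨zero_le_one, le_rfl⟩ hl).le
    rw [hFσ, ← hFs, hF₂' 1, hkm, ← hF₁' m] at h2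
    have h3 := (mul_le_mul_iff_right₀ h2pos).mp h2
    linarith
  have hsp1 : s ^ p ≤ 1 := Real.rpow_le_one hs.1 hs.2 hp0.le
  have hks := key s ⟨hs.1, hsm⟩
  have hsig_mem : HA.sig p s ∈ Set.Icc (0:ℝ) 1 :=
    ⟨HA.sig_nonneg hs.1 hsp1, HA.sig_le_one hp hs.1 hsp1⟩
  have hσeq : σ = HA.sig p s := by
    refine F2mono.injOn hσ hsig_mem ?_
    show (∫ t in (0:ℝ)..σ, HA.g p (1/2) t) = ∫ t in (0:ℝ)..(HA.sig p s), HA.g p (1/2) t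
    rw [← hF₂' σ, hks, ← hF₁' s, hFs, ← hFσ]
  have hsph : s ^ p ≤ 1/2 := by
    calc s ^ p ≤ m ^ p := Real.rpow_le_rpow hs.1 hsm hp0.le
    _ = 1/2 := hmp
  have hc0 : (0:ℝ) ≤ 1 - 2 * s ^ p := by linarith
  have hσp : σ ^ p = 4 * s ^ p * (1 - s ^ p) := by
    rw [hσeq, HA.sig_pow hp hs.1 hsp1]
  have hCval : C = 1 - 2 * s ^ p := by
    rw [hC, hσp, show (1 - 4 * s ^ p * (1 - s ^ p)) = (1 - 2 * s ^ p) ^ 2 by ring,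
      ← Real.rpow_two, ← Real.rpow_mul hc0]
    norm_num
  rw [hCval, show (1 - (1 - 2 * s ^ p)) / 2 = s ^ p by ring,
    ← Real.rpow_mul hs.1, mul_one_div_cancel hp0.ne', Real.rpow_one]
end

section
/- Let p > 1 and p* = p/(p−1). Let F₁(s) = ∫₀ˢ (1 − t^p)^{−1/p*} dt and F₂(s) = ∫₀ˢ (1 − t^p)^{−1/2} dt for s ∈ [0,1], with π_{p*,p} = 2F₁(1). For every x ∈ [0, π_{p*,p}/2], if s, σ ∈ [0,1] satisfy F₁(s) = x and F₂(σ) = 2^{2/p}·x, and C = (1 − σ^p)^{1/2}, then (1 − s^p)^{1/p*} = ((1 + C)/2)^{1/p*}; equivalently 1 − s^p = (1 + C)/2. -/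
open MeasureTheory intervalIntegral Set Real

lemma ha_integrable {p a : ℝ} (hp : 1 < p) (ha0 : 0 < a) (ha1 : a < 1) :
    IntervalIntegrable (fun t : ℝ => (1 - t ^ p) ^ (-a)) volume 0 1 := by
  have hg : IntervalIntegrable (fun t : ℝ => (1 - t) ^ (-a)) volume 0 1 := by
    have h := (intervalIntegral.intervalIntegrable_rpow' (a := 0) (b := 1)
      (by linarith : (-1:ℝ) < -a)).comp_sub_left 1
    simpa using h.symm
  refine hg.mono_fun ?_ ?_
  · exact (((measurable_id (α := ℝ)).pow_const p).const_sub 1 |>.pow_const (-a)).aestronglyMeasurable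
  · filter_upwards [MeasureTheory.ae_restrict_mem measurableSet_uIoc] with t ht
    rw [Set.uIoc_of_le (by norm_num : (0:ℝ) ≤ 1)] at ht
    obtain ⟨ht0, ht1⟩ := ht
    have htp1 : t ^ p ≤ 1 := Real.rpow_le_one ht0.le ht1 (by linarith)
    have htpt : t ^ p ≤ t := by
      calc t ^ p ≤ t ^ (1:ℝ) :=
        Real.rpow_le_rpow_of_exponent_ge ht0 ht1 hp.le
      _ = t := Real.rpow_one t
    have h1 : (0:ℝ) ≤ 1 - t ^ p := by linarith
    have h2 : 1 - t ≤ 1 - t ^ p := by linarith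
    rw [Real.norm_eq_abs, Real.norm_eq_abs, abs_of_nonneg (Real.rpow_nonneg h1 _),
      abs_of_nonneg (Real.rpow_nonneg (by linarith) _)]
    rcases eq_or_lt_of_le ht1 with h | h
    · subst h
      simp [Real.one_rpow, Real.zero_rpow (show -a ≠ 0 by linarith)]
    · exact Real.rpow_le_rpow_of_nonpos (by linarith) h2 (by linarith)

lemma ha_primitive_lt {p a : ℝ} (hp : 1 < p) (ha0 : 0 < a) (ha1 : a < 1) {u v : ℝ}
    (hu : 0 ≤ u) (huv : u < v) (hv : v ≤ 1) :
    (∫ t in (0:ℝ)..u, (1 - t ^ p) ^ (-a)) < ∫ t in (0:ℝ)..v, (1 - t ^ p) ^ (-a) := by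
  have hI := ha_integrable hp ha0 ha1
  have hIu : IntervalIntegrable (fun t : ℝ => (1 - t ^ p) ^ (-a)) volume 0 u := by
    apply hI.mono_set
    rw [Set.uIcc_of_le hu, Set.uIcc_of_le (by norm_num : (0:ℝ) ≤ 1)]
    exact Set.Icc_subset_Icc le_rfl (by linarith)
  have hIuv : IntervalIntegrable (fun t : ℝ => (1 - t ^ p) ^ (-a)) volume u v := by
    apply hI.mono_set
    rw [Set.uIcc_of_le huv.le, Set.uIcc_of_le (by norm_num : (0:ℝ) ≤ 1)]
    exact Set.Icc_subset_Icc hu hv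
  have hadd := intervalIntegral.integral_add_adjacent_intervals hIu hIuv
  have hpos : (0:ℝ) < ∫ t in u..v, (1 - t ^ p) ^ (-a) := by
    refine intervalIntegral.intervalIntegral_pos_of_pos_on hIuv (fun t ht => ?_) huv
    have h1 : t ^ p < 1 := Real.rpow_lt_one (le_trans hu ht.1.le) (lt_of_lt_of_le ht.2 hv) (by linarith)
    exact Real.rpow_pos_of_pos (by linarith) _
  linarith

section Key
variable {p : ℝ}

/-- the substituted variable -/
noncomputable def sigf (p t : ℝ) : ℝ := 2 ^ (2/p) * (t * (1 - t ^ p) ^ (1/p))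

/-- its derivative -/
noncomputable def sigd (p t : ℝ) : ℝ :=
  2 ^ (2/p) * ((1 - t ^ p) ^ (1/p) + t * (-(p * t ^ (p-1)) * (1/p) * (1 - t ^ p) ^ (1/p - 1)))

lemma sigf_hasDeriv (hp : 1 < p) {t : ℝ} (ht : 1 - t ^ p ≠ 0) :
    HasDerivAt (sigf p) (sigd p t) t := by
  have h1 : HasDerivAt (fun t : ℝ => t ^ p) (p * t ^ (p-1)) t :=
    Real.hasDerivAt_rpow_const (Or.inr hp.le)
  have h2 : HasDerivAt (fun t : ℝ => 1 - t ^ p) (-(p * t ^ (p-1))) t := by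
    simpa using h1.const_sub 1
  have h3 : HasDerivAt (fun t : ℝ => (1 - t ^ p) ^ (1/p))
      (-(p * t ^ (p-1)) * (1/p) * (1 - t ^ p) ^ (1/p - 1)) t :=
    h2.rpow_const (Or.inl ht)
  refine (((hasDerivAt_id t).mul h3).const_mul ((2:ℝ) ^ (2/p))).congr_deriv ?_
  unfold sigd
  simp only [id_eq]
  ring

lemma sigf_pow (hp : 1 < p) {t : ℝ} (ht0 : 0 ≤ t) (htp : t ^ p ≤ 1) :
    (sigf p t) ^ p = 4 * (t ^ p * (1 - t ^ p)) := by
  have hp0 : (0:ℝ) < p := by linarith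
  have h2 : (0:ℝ) ≤ 2 ^ (2/p) := (Real.rpow_nonneg (by norm_num) _)
  have hX : (0:ℝ) ≤ 1 - t ^ p := by linarith
  have hp' : p ≠ 0 := by linarith
  rw [sigf, Real.mul_rpow h2 (mul_nonneg ht0 (Real.rpow_nonneg hX _)),
    Real.mul_rpow ht0 (Real.rpow_nonneg hX _), ← Real.rpow_mul (by norm_num : (0:ℝ) ≤ 2),
    ← Real.rpow_mul hX]
  rw [div_mul_cancel₀ _ hp', one_div, inv_mul_cancel₀ hp', Real.rpow_one]
  norm_num

lemma keypt (hp : 1 < p) {t : ℝ} (ht0 : 0 ≤ t) (htb : t ^ p < 1/2) :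
    sigd p t * (1 - (sigf p t) ^ p) ^ (-(1/2) : ℝ)
      = 2 ^ (2/p) * (1 - t ^ p) ^ (-(1 - 1/p)) := by
  have hp0 : (0:ℝ) < p := by linarith
  have hp' : p ≠ 0 := hp0.ne'
  have hA : (0:ℝ) ≤ t ^ p := Real.rpow_nonneg ht0 _
  have hX : (0:ℝ) < 1 - t ^ p := by linarith
  have hY : (0:ℝ) < 1 - 2 * t ^ p := by linarith
  have hσp : (sigf p t) ^ p = 4 * (t ^ p * (1 - t ^ p)) :=
    sigf_pow hp ht0 (by linarith)
  have hsq : 1 - (sigf p t) ^ p = (1 - 2 * t ^ p) ^ (2:ℕ) := by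
    rw [hσp]; ring
  have hhalf : (1 - (sigf p t) ^ p) ^ (-(1/2) : ℝ) = (1 - 2 * t ^ p)⁻¹ := by
    rw [hsq, ← Real.rpow_natCast (1 - 2 * t ^ p) 2, ← Real.rpow_mul hY.le]
    norm_num
    exact Real.rpow_neg_one _
  have htt : t * t ^ (p - 1) = t ^ p := by
    have h := (Real.rpow_add' (y := 1) (z := p - 1) ht0
      (by rw [show (1:ℝ) + (p - 1) = p by ring]; exact hp')).symm
    rw [Real.rpow_one] at h
    rwa [show (1:ℝ) + (p - 1) = p by ring] at h
  have hXsplit : (1 - t ^ p) ^ (1/p) = (1 - t ^ p) ^ (1/p - 1) * (1 - t ^ p) := by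
    nth_rewrite 1 [show (1:ℝ)/p = (1/p - 1) + 1 by ring]
    rw [Real.rpow_add hX, Real.rpow_one]
  have hexp : -(1 - 1/p) = 1/p - 1 := by ring
  have hsigd : sigd p t = 2 ^ (2/p) * ((1 - t ^ p) ^ (1/p) - t ^ p * (1 - t ^ p) ^ (1/p - 1)) := by
    unfold sigd
    congr 1
    rw [← htt]
    field_simp
    ring
  rw [hhalf, hexp, hsigd, hXsplit]
  have hYne : (1 - 2 * t ^ p) ≠ 0 := hY.ne'
  field_simp
  ring

lemma key_subst (hp : 1 < p) {s : ℝ} (h0 : 0 ≤ s) (hb : s ^ p < 1/2) :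
    (∫ u in (0:ℝ)..(sigf p s), (1 - u ^ p) ^ (-(1/2) : ℝ))
      = 2 ^ (2/p) * ∫ t in (0:ℝ)..s, (1 - t ^ p) ^ (-(1 - 1/p)) := by
  have hp0 : (0:ℝ) < p := by linarith
  have hu : Set.uIcc (0:ℝ) s = Set.Icc 0 s := Set.uIcc_of_le h0
  have hmem : ∀ x ∈ Set.uIcc (0:ℝ) s, 0 ≤ x ∧ x ^ p < 1/2 := by
    intro x hx
    rw [hu] at hx
    exact ⟨hx.1, lt_of_le_of_lt (Real.rpow_le_rpow hx.1 hx.2 hp0.le) hb⟩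
  have hXpos : ∀ x ∈ Set.uIcc (0:ℝ) s, (0:ℝ) < 1 - x ^ p := by
    intro x hx
    have := (hmem x hx).2
    linarith
  -- continuity of x ^ p
  have hcp : Continuous fun x : ℝ => x ^ p :=
    Continuous.rpow_const continuous_id fun _ => Or.inr hp0.le
  have hcp1 : Continuous fun x : ℝ => x ^ (p - 1) :=
    Continuous.rpow_const continuous_id fun _ => Or.inr (by linarith)
  have hder : ∀ x ∈ Set.uIcc (0:ℝ) s, HasDerivAt (sigf p) (sigd p x) x :=
    fun x hx => sigf_hasDeriv hp (hXpos x hx).ne'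
  have hcont : ContinuousOn (sigd p) (Set.uIcc (0:ℝ) s) := by
    apply ContinuousOn.mul continuousOn_const
    apply ContinuousOn.add
    · intro x hx
      exact ((continuous_const.sub hcp).continuousAt.rpow_const
        (Or.inl (hXpos x hx).ne')).continuousWithinAt
    · apply ContinuousOn.mul (continuous_id.continuousOn)
      apply ContinuousOn.mul
      · exact (((continuous_const.mul hcp1).neg.mul continuous_const).continuousOn)
      · intro x hx
        exact ((continuous_const.sub hcp).continuousAt.rpow_const
          (Or.inl (hXpos x hx).ne')).continuousWithinAt
  have himg : ContinuousOn (fun u : ℝ => (1 - u ^ p) ^ (-(1/2) : ℝ))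
      (sigf p '' Set.uIcc (0:ℝ) s) := by
    rintro _ ⟨x, hx, rfl⟩
    obtain ⟨hx0, hxb⟩ := hmem x hx
    have h4 : (sigf p x) ^ p = 4 * (x ^ p * (1 - x ^ p)) := sigf_pow hp hx0 (by nlinarith)
    have hpos : (0:ℝ) < 1 - (sigf p x) ^ p := by
      rw [h4]; nlinarith [Real.rpow_nonneg hx0 p]
    exact ((continuous_const.sub hcp).continuousAt.rpow_const
      (Or.inl hpos.ne')).continuousWithinAt
  have hsub := intervalIntegral.integral_comp_smul_deriv' hder hcont himg
  have hσ0 : sigf p 0 = 0 := by simp [sigf]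
  rw [hσ0] at hsub
  rw [← hsub]
  rw [← intervalIntegral.integral_const_mul]
  apply intervalIntegral.integral_congr
  intro x hx
  obtain ⟨hx0, hxb⟩ := hmem x hx
  have := keypt hp hx0 hxb
  simp only [smul_eq_mul, Function.comp]
  rw [← this]

end Key

section Main
variable {p : ℝ}

lemma sigf_cont (hp : 1 < p) : Continuous (sigf p) := by
  have hp0 : (0:ℝ) < p := by linarith
  have hcp : Continuous fun x : ℝ => x ^ p :=
    Continuous.rpow_const continuous_id fun _ => Or.inr hp0.le
  exact continuous_const.mul (continuous_id.mul
    ((continuous_const.sub hcp).rpow_const fun _ => Or.inr (by positivity)))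

lemma sigf_mem (hp : 1 < p) {y : ℝ} (hy0 : 0 ≤ y) (hyp : y ^ p ≤ 1/2) :
    sigf p y ∈ Set.Icc (0:ℝ) 1 := by
  have hp0 : (0:ℝ) < p := by linarith
  have hA : (0:ℝ) ≤ y ^ p := Real.rpow_nonneg hy0 _
  have h0 : 0 ≤ sigf p y := by
    unfold sigf
    have : (0:ℝ) ≤ (1 - y ^ p) ^ (1/p) := Real.rpow_nonneg (by linarith) _
    positivity
  refine ⟨h0, ?_⟩
  have hσp : (sigf p y) ^ p = 4 * (y ^ p * (1 - y ^ p)) := sigf_pow hp hy0 (by linarith)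
  by_contra h
  push_neg at h
  have h1 : 1 < (sigf p y) ^ p :=
    Real.one_lt_rpow_iff_of_pos (by linarith) |>.mpr (Or.inl ⟨h, hp0⟩)
  nlinarith [sq_nonneg (1 - 2 * y ^ p)]

lemma bconst (hp : 1 < p) :
    ((2:ℝ) ^ (-(1/p))) ^ p = 1/2 ∧ (0:ℝ) < (2:ℝ) ^ (-(1/p)) ∧ ((2:ℝ) ^ (-(1/p))) ≤ 1
      ∧ sigf p ((2:ℝ) ^ (-(1/p))) = 1 := by
  have hp0 : (0:ℝ) < p := by linarith
  have hp' : p ≠ 0 := hp0.ne'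
  have hbp : ((2:ℝ) ^ (-(1/p))) ^ p = 1/2 := by
    rw [← Real.rpow_mul (by norm_num : (0:ℝ) ≤ 2)]
    rw [show -(1/p) * p = -1 by field_simp]
    rw [Real.rpow_neg_one]
    norm_num
  have hb0 : (0:ℝ) < (2:ℝ) ^ (-(1/p)) := Real.rpow_pos_of_pos (by norm_num) _
  have hb1 : ((2:ℝ) ^ (-(1/p))) ≤ 1 := by
    apply Real.rpow_le_one_of_one_le_of_nonpos (by norm_num)
    rw [neg_nonpos]
    positivity
  refine ⟨hbp, hb0, hb1, ?_⟩
  unfold sigf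
  rw [hbp]
  rw [show (1:ℝ) - 1/2 = 2 ^ (-1 : ℝ) by rw [Real.rpow_neg_one]; norm_num]
  rw [← Real.rpow_mul (by norm_num : (0:ℝ) ≤ 2)]
  rw [← Real.rpow_add (by norm_num : (0:ℝ) < 2), ← Real.rpow_add (by norm_num : (0:ℝ) < 2)]
  rw [show 2/p + (-(1/p) + -1 * (1/p)) = 0 by ring, Real.rpow_zero]

lemma claim_all (hp : 1 < p) {y : ℝ} (hy0 : 0 ≤ y) (hyb : y ≤ (2:ℝ) ^ (-(1/p))) :
    (∫ u in (0:ℝ)..(sigf p y), (1 - u ^ p) ^ (-(1/2) : ℝ))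
      = 2 ^ (2/p) * ∫ t in (0:ℝ)..y, (1 - t ^ p) ^ (-(1 - 1/p)) := by
  have hp0 : (0:ℝ) < p := by linarith
  obtain ⟨hbp, hb0, hb1, hsb⟩ := bconst hp
  set b : ℝ := (2:ℝ) ^ (-(1/p)) with hbdef
  rcases lt_or_eq_of_le hyb with h | h
  · exact key_subst hp hy0 (by calc y ^ p < b ^ p := Real.rpow_lt_rpow hy0 h hp0
      _ = 1/2 := hbp)
  · -- y = b : continuity argument
    subst h
    have ha1 : (0:ℝ) < 1 - 1/p := by
      have : 1/p < 1 := by rw [div_lt_one hp0]; exact hp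
      linarith
    have hI2int : IntervalIntegrable (fun u : ℝ => (1 - u ^ p) ^ (-(1/2) : ℝ)) volume 0 1 :=
      ha_integrable hp (by norm_num) (by norm_num)
    have hI1int : IntervalIntegrable (fun t : ℝ => (1 - t ^ p) ^ (-(1 - 1/p))) volume 0 1 :=
      ha_integrable hp ha1 (by linarith [one_div_pos.mpr hp0])
    have hI2cont : ContinuousOn (fun z => ∫ u in (0:ℝ)..z, (1 - u ^ p) ^ (-(1/2) : ℝ))
        (Set.Icc (0:ℝ) 1) := by
      have := intervalIntegral.continuousOn_primitive_interval
        (f := fun u : ℝ => (1 - u ^ p) ^ (-(1/2) : ℝ)) (μ := volume) (a := 0) (b := 1) ?_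
      · simpa [Set.uIcc_of_le (by norm_num : (0:ℝ) ≤ 1)] using this
      · rw [Set.uIcc_of_le (by norm_num : (0:ℝ) ≤ 1)]
        exact (intervalIntegrable_iff_integrableOn_Icc_of_le (by norm_num)).mp hI2int
    have hI1cont : ContinuousOn (fun z => ∫ t in (0:ℝ)..z, (1 - t ^ p) ^ (-(1 - 1/p)))
        (Set.Icc (0:ℝ) 1) := by
      have := intervalIntegral.continuousOn_primitive_interval
        (f := fun t : ℝ => (1 - t ^ p) ^ (-(1 - 1/p))) (μ := volume) (a := 0) (b := 1) ?_
      · simpa [Set.uIcc_of_le (by norm_num : (0:ℝ) ≤ 1)] using this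
      · rw [Set.uIcc_of_le (by norm_num : (0:ℝ) ≤ 1)]
        exact (intervalIntegrable_iff_integrableOn_Icc_of_le (by norm_num)).mp hI1int
    -- left-hand side function and right-hand side function, continuous within at b
    have hmaps : Set.MapsTo (sigf p) (Set.Icc 0 b) (Set.Icc (0:ℝ) 1) := by
      intro z hz
      refine sigf_mem hp hz.1 ?_
      calc z ^ p ≤ b ^ p := Real.rpow_le_rpow hz.1 hz.2 hp0.le
      _ = 1/2 := hbp
    have hR : ContinuousWithinAt (fun z => ∫ t in (0:ℝ)..z, (1 - t ^ p) ^ (-(1 - 1/p)))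
        (Set.Ico 0 b) b :=
      (hI1cont b ⟨hb0.le, hb1⟩).mono (fun z hz => ⟨hz.1, hz.2.le.trans hb1⟩)
    have hLb : ContinuousWithinAt
        (fun z => ∫ u in (0:ℝ)..(sigf p z), (1 - u ^ p) ^ (-(1/2) : ℝ)) (Set.Ico 0 b) b :=
      ((hI2cont.comp ((sigf_cont hp).continuousOn) hmaps) b
        (Set.right_mem_Icc.mpr hb0.le)).mono Set.Ico_subset_Icc_self
    have hne : (nhdsWithin b (Set.Ico (0:ℝ) b)).NeBot := by
      apply mem_closure_iff_nhdsWithin_neBot.mp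
      rw [closure_Ico hb0.ne]
      exact Set.right_mem_Icc.mpr hb0.le
    have heq : ∀ᶠ z in nhdsWithin b (Set.Ico (0:ℝ) b),
        (∫ u in (0:ℝ)..(sigf p z), (1 - u ^ p) ^ (-(1/2) : ℝ))
          = 2 ^ (2/p) * ∫ t in (0:ℝ)..z, (1 - t ^ p) ^ (-(1 - 1/p)) := by
      filter_upwards [self_mem_nhdsWithin] with z hz
      refine key_subst hp hz.1 ?_
      calc z ^ p < b ^ p := Real.rpow_lt_rpow hz.1 hz.2 hp0
      _ = 1/2 := hbp
    have hT1 := hLb.tendsto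
    have hT2 := (hR.tendsto).const_mul ((2:ℝ) ^ (2/p))
    exact tendsto_nhds_unique (hT1.congr' heq) hT2

end Main



/-- Half-angle formula (2.4): cos_{p*,p} x = ((1 + cos_{2,p}(2^{2/p} x))/2)^{1/p*}. -/
theorem half_angle_cosine
    (p pst : ℝ) (hp : 1 < p) (hpst : pst = p / (p - 1))
    (F₁ F₂ : ℝ → ℝ)
    (hF₁ : ∀ s, F₁ s = ∫ t in (0:ℝ)..s, (1 - t ^ p) ^ (-(1/pst)))
    (hF₂ : ∀ s, F₂ s = ∫ t in (0:ℝ)..s, (1 - t ^ p) ^ (-(1/2) : ℝ))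
    (pipstp : ℝ) (hpi : pipstp = 2 * F₁ 1)
    (x : ℝ) (hx : x ∈ Set.Icc 0 (pipstp / 2))
    (s σ : ℝ) (hs : s ∈ Set.Icc (0:ℝ) 1) (hσ : σ ∈ Set.Icc (0:ℝ) 1)
    (hFs : F₁ s = x) (hFσ : F₂ σ = 2 ^ ((2:ℝ)/p) * x)
    (C : ℝ) (hC : C = (1 - σ ^ p) ^ ((1:ℝ)/2)) :
    (1 - s ^ p) ^ (1/pst) = ((1 + C) / 2) ^ (1/pst) ∧ 1 - s ^ p = (1 + C) / 2 := by
  have hp0 : (0:ℝ) < p := by linarith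
  have hp' : p ≠ 0 := hp0.ne'
  have hpm1 : p - 1 ≠ 0 := by intro h; apply hp.ne'; linarith
  have h1pst : (1:ℝ)/pst = 1 - 1/p := by
    rw [hpst, one_div_div]
    field_simp
  have h1p : (0:ℝ) < 1/p := by positivity
  have ha1 : (0:ℝ) < 1 - 1/p := by
    have : 1/p < 1 := by rw [div_lt_one hp0]; exact hp
    linarith
  obtain ⟨hbp, hb0, hb1, hsb⟩ := bconst hp
  set b : ℝ := (2:ℝ) ^ (-(1/p)) with hbdef
  set I₁ : ℝ → ℝ := fun z => ∫ t in (0:ℝ)..z, (1 - t ^ p) ^ (-(1 - 1/p)) with hI₁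
  set I₂ : ℝ → ℝ := fun z => ∫ t in (0:ℝ)..z, (1 - t ^ p) ^ (-(1/2) : ℝ) with hI₂
  have hF₁' : ∀ z, F₁ z = I₁ z := fun z => by rw [hF₁ z, h1pst]
  have hF₂' : ∀ z, F₂ z = I₂ z := hF₂
  have h2p : (0:ℝ) < 2 ^ ((2:ℝ)/p) := Real.rpow_pos_of_pos (by norm_num) _
  have hsleb : s ≤ b := by
    by_contra hbs
    push_neg at hbs
    have h1 : I₁ b < I₁ s :=
      ha_primitive_lt hp ha1 (by linarith) hb0.le hbs hs.2
    have h2 : I₂ σ ≤ I₂ 1 := by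
      rcases eq_or_lt_of_le hσ.2 with h | h
      · rw [h]
      · exact (ha_primitive_lt hp (by norm_num) (by norm_num) hσ.1 h le_rfl).le
    have h3 : I₂ 1 = 2 ^ ((2:ℝ)/p) * I₁ b := by
      have := claim_all hp hb0.le le_rfl
      rwa [hsb] at this
    have h4 : I₂ σ = 2 ^ ((2:ℝ)/p) * I₁ s := by
      rw [← hF₂' σ, hFσ, ← hFs, hF₁' s]
    nlinarith
  have hsp : s ^ p ≤ 1/2 := by
    rw [← hbp]
    exact Real.rpow_le_rpow hs.1 hsleb hp0.le
  have hkey : I₂ (sigf p s) = 2 ^ ((2:ℝ)/p) * I₁ s := claim_all hp hs.1 hsleb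
  have hσeq : σ = sigf p s := by
    have hmem := sigf_mem hp hs.1 hsp
    have hIeq : I₂ σ = I₂ (sigf p s) := by
      rw [hkey, ← hF₂' σ, hFσ, ← hFs, hF₁' s]
    rcases lt_trichotomy σ (sigf p s) with h | h | h
    · exact absurd hIeq
        (ne_of_lt (ha_primitive_lt hp (by norm_num) (by norm_num) hσ.1 h hmem.2))
    · exact h
    · exact absurd hIeq.symm
        (ne_of_lt (ha_primitive_lt hp (by norm_num) (by norm_num) hmem.1 h hσ.2))
  have hσp : σ ^ p = 4 * (s ^ p * (1 - s ^ p)) := by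
    rw [hσeq]; exact sigf_pow hp hs.1 (by linarith)
  have hYnn : (0:ℝ) ≤ 1 - 2 * s ^ p := by linarith
  have hCval : C = 1 - 2 * s ^ p := by
    rw [hC, hσp, show (1:ℝ) - 4 * (s ^ p * (1 - s ^ p)) = (1 - 2 * s ^ p) ^ (2:ℕ) by ring,
      ← Real.rpow_natCast (1 - 2 * s ^ p) 2, ← Real.rpow_mul hYnn]
    norm_num
  have hfinal : 1 - s ^ p = (1 + C) / 2 := by rw [hCval]; ring
  exact ⟨by rw [hfinal], hfinal⟩
end
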